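/- arXiv:0901.0880 — 12 statements merged into one kernel-verified Lean document; each statement's English description precedes it below -/
import Mathlib

section
/- Let (Γ, ⪯) be a left-ordered group. The ordering ⪯ is Conradian if and only if (Γ, ⪯) admits no crossing. -/
/-- A crossing for a left-ordered group `(Γ, ≤)`: a 5-tuple `(f, g, u, v, w)` with
`u < w < v`, `gⁿ u < v` and `fⁿ v > u` for every positive integer `n`, and
positive integers `M, N` with `f^N v < w < g^M u`. -/
def IsCrossing {Γ : Type*} [Group Γ] [LinearOrder Γ] (f g u v w : Γ) : Prop :=
  u < w ∧ w < v ∧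
  (∀ n : ℕ, 0 < n → g ^ n * u < v ∧ u < f ^ n * v) ∧
  ∃ M N : ℕ, 0 < M ∧ 0 < N ∧ f ^ N * v < w ∧ w < g ^ M * u

/-- The ordering of a left-ordered group is Conradian if for all positive `f, g`
there is a positive integer `n` with `f * gⁿ > g`. -/
def IsConradian (Γ : Type*) [Group Γ] [LinearOrder Γ] : Prop :=
  ∀ f g : Γ, 1 < f → 1 < g → ∃ n : ℕ, 0 < n ∧ g < f * g ^ n

/-!
Conjugating by `p` turns the Conradian condition into one about the orbit of a base point:
`p < a p`, `p < b p` force `b p < a bⁿ p` for some `n > 0`. Given a crossing, put `F = f^N`,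
`G = g^M` and `p = F v`; then `p < G p` and `p < G F p`, while `Gⁿ p < Gⁿ⁺¹ u < v` gives
`F Gⁿ p < F v = p`, so `a = G F`, `b = G` violate the condition at `p`. Conversely, if
`f, g > 1` satisfy `f gⁿ ≤ g` for all `n > 0`, then `(f, f g, 1, g, f g)` is a crossing
(with `M = N = 2`).
-/

section

variable {Γ : Type*} [Group Γ] [LinearOrder Γ] [MulLeftMono Γ]

theorem IsConradian.exists_lt_mul_pow_mul (hC : IsConradian Γ) {a b p : Γ}
    (ha : p < a * p) (hb : p < b * p) : ∃ n : ℕ, 0 < n ∧ b * p < a * (b ^ n * p) := by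
  have hconj : ∀ c : Γ, 1 < p⁻¹ * c * p ↔ p < c * p := fun c => by
    rw [mul_assoc, lt_inv_mul_iff_lt]
  obtain ⟨n, hn, hlt⟩ :=
    hC (p⁻¹ * a * p) (p⁻¹ * b * p) ((hconj a).2 ha) ((hconj b).2 hb)
  have hpow : (p⁻¹ * b * p) ^ n = p⁻¹ * b ^ n * p := by
    simpa using conj_pow (a := p⁻¹) (b := b) (i := n)
  refine ⟨n, hn, ?_⟩
  rw [hpow] at hlt
  rw [← mul_lt_mul_iff_left p⁻¹]
  simpa only [mul_assoc, mul_inv_cancel_left] using hlt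

theorem IsConradian.not_isCrossing (hC : IsConradian Γ) (f g u v w : Γ) :
    ¬ IsCrossing f g u v w := by
  rintro ⟨-, -, hpow, M, N, hM, hN, hfv, hgu⟩
  set F := f ^ N
  set G := g ^ M
  have hGu : ∀ k, 0 < k → G ^ k * u < v := fun k hk => by
    simpa only [G, ← pow_mul] using (hpow (M * k) (Nat.mul_pos hM hk)).1
  have hFv : ∀ k, 0 < k → u < F ^ k * v := fun k hk => by
    simpa only [F, ← pow_mul] using (hpow (N * k) (Nat.mul_pos hN hk)).2
  set p := F * v
  have hp : p < G * u := hfv.trans hgu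
  have hGp : p < G * p := hp.trans ((mul_lt_mul_iff_left G).2 (by simpa using hFv 1 one_pos))
  have hGFp : p < G * F * p := by
    refine hp.trans ?_
    rw [mul_assoc, mul_lt_mul_iff_left, ← mul_assoc, ← sq]
    exact hFv 2 two_pos
  have hGnp : ∀ n, G ^ n * p < v := fun n => calc
    G ^ n * p < G ^ n * (G * u) := (mul_lt_mul_iff_left _).2 hp
    _ = G ^ (n + 1) * u := by rw [pow_succ, mul_assoc]
    _ < v := hGu (n + 1) n.succ_pos
  obtain ⟨n, -, hn⟩ := hC.exists_lt_mul_pow_mul hGFp hGp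
  have : p < F * (G ^ n * p) := by
    rwa [mul_assoc, mul_lt_mul_iff_left] at hn
  exact lt_asymm this ((mul_lt_mul_iff_left F).2 (hGnp n))

theorem mul_pow_lt_of_mul_sq_le {f g : Γ} (h₁ : f * g < g) (h₂ : f * g ^ 2 ≤ g) :
    ∀ n, 0 < n → (f * g) ^ n < g
  | 1, _ => by rwa [pow_one]
  | n + 2, _ => calc
    (f * g) ^ (n + 2) = f * g * (f * g) ^ (n + 1) := pow_succ' _ _
    _ < f * g * g :=
      (mul_lt_mul_iff_left _).2 (mul_pow_lt_of_mul_sq_le h₁ h₂ (n + 1) n.succ_pos)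
    _ = f * g ^ 2 := by rw [mul_assoc, sq]
    _ ≤ g := h₂

theorem isCrossing_of_mul_sq_le {f g : Γ} (hf : 1 < f) (hg : 1 < g) (h₁ : f * g < g)
    (h₂ : f * g ^ 2 ≤ g) : IsCrossing f (f * g) 1 g (f * g) := by
  have hfg : 1 < f * g := one_lt_mul' hf hg
  refine ⟨hfg, h₁, fun n hn => ⟨?_, ?_⟩, 2, 2, two_pos, two_pos, ?_, ?_⟩
  · simpa using mul_pow_lt_of_mul_sq_le h₁ h₂ n hn
  · exact one_lt_mul' (one_lt_pow' hf hn.ne') hg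
  · rwa [sq, mul_assoc, mul_lt_mul_iff_left]
  · simpa [sq] using hfg

end

/-- The ordering of a left-ordered group is Conradian iff it admits no crossing. -/
theorem isConradian_iff_no_crossing (Γ : Type*) [Group Γ] [LinearOrder Γ]
    [CovariantClass Γ Γ (· * ·) (· ≤ ·)] :
    IsConradian Γ ↔ ∀ f g u v w : Γ, ¬ IsCrossing f g u v w := by
  refine ⟨IsConradian.not_isCrossing, fun h f g hf hg => ?_⟩
  by_contra! hle
  have h₁ : f * g < g :=
    (pow_one g ▸ hle 1 one_pos).lt_of_ne fun heq => hf.ne' (by simpa using heq)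
  exact h f (f * g) 1 g (f * g) (isCrossing_of_mul_sq_le hf hg h₁ (hle 2 two_pos))
end

section
/- Let (Γ, ⪯) be a left-ordered group and let (f, g, u, v, w) be a crossing for (Γ, ⪯). Then f^n v ≻ u and g^n u ≺ v hold for every integer n (positive, zero, or negative); in particular f v ≺ v. -/
private lemma pow_le_aux {Γ : Type*} [Group Γ] [LinearOrder Γ]
    [CovariantClass Γ Γ (· * ·) (· ≤ ·)] (a x : Γ) (h : x ≤ a * x) :
    ∀ n : ℕ, x ≤ a ^ n * x := by
  intro n
  induction n with
  | zero => simp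
  | succ k ih =>
    calc x ≤ a ^ k * x := ih
    _ ≤ a ^ k * (a * x) := mul_le_mul_right h _
    _ = a ^ (k + 1) * x := by rw [pow_succ']; group

private lemma pow_ge_aux {Γ : Type*} [Group Γ] [LinearOrder Γ]
    [CovariantClass Γ Γ (· * ·) (· ≤ ·)] (a x : Γ) (h : a * x ≤ x) :
    ∀ n : ℕ, a ^ n * x ≤ x := by
  intro n
  induction n with
  | zero => simp
  | succ k ih =>
    calc a ^ (k + 1) * x = a ^ k * (a * x) := by rw [pow_succ']; group
    _ ≤ a ^ k * x := mul_le_mul_right h _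
    _ ≤ x := ih

/-- If `(f, g, u, v, w)` is a crossing, then `fⁿ v > u` and `gⁿ u < v` hold for
every integer `n`; in particular `f v < v`. -/
theorem crossing_all_int_powers {Γ : Type*} [Group Γ] [LinearOrder Γ]
    [CovariantClass Γ Γ (· * ·) (· ≤ ·)] (f g u v w : Γ)
    (h : IsCrossing f g u v w) :
    (∀ n : ℤ, u < f ^ n * v ∧ g ^ n * u < v) ∧ f * v < v := by
  obtain ⟨huw, hwv, hpos, M, N, hM, hN, hfN, hgM⟩ := h
  have huv : u < v := huw.trans hwv
  -- f * v < v
  have hfv : f * v < v := by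
    by_contra hc
    push_neg at hc
    exact absurd (pow_le_aux f v hc N) (not_le.mpr (hfN.trans hwv))
  -- u < g * u
  have hgu : u < g * u := by
    by_contra hc
    push_neg at hc
    exact absurd (pow_ge_aux g u hc M) (not_le.mpr (huw.trans hgM))
  -- v ≤ f⁻¹ * v
  have hfinv : v ≤ f⁻¹ * v := by
    have := mul_le_mul_right hfv.le f⁻¹
    simpa [mul_assoc] using this
  have hginv : g⁻¹ * u ≤ u := by
    have := mul_le_mul_right hgu.le g⁻¹
    simpa [mul_assoc] using this
  refine ⟨fun n => ?_, hfv⟩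
  cases n with
  | ofNat m =>
    cases m with
    | zero => exact ⟨by simpa using huv, by simpa using huv⟩
    | succ k =>
      obtain ⟨h1, h2⟩ := hpos (k + 1) (Nat.succ_pos k)
      rw [show (Int.ofNat (k + 1)) = ((k + 1 : ℕ) : ℤ) from rfl]; simp only [zpow_natCast]
      exact ⟨h2, h1⟩
  | negSucc m =>
    have hf : f ^ Int.negSucc m * v = (f⁻¹) ^ (m + 1) * v := by
      rw [zpow_negSucc, inv_pow]
    have hg : g ^ Int.negSucc m * u = (g⁻¹) ^ (m + 1) * u := by
      rw [zpow_negSucc, inv_pow]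
    constructor
    · rw [hf]
      exact lt_of_lt_of_le huv (pow_le_aux f⁻¹ v hfinv (m + 1))
    · rw [hg]
      exact lt_of_le_of_lt (pow_ge_aux g⁻¹ u hginv (m + 1)) huv
end

section
/- Let (Γ, ⪯) be a left-ordered group. Every reinforced crossing for (Γ, ⪯) is a crossing for (Γ, ⪯). -/
/-- A reinforced crossing for a left-ordered group `(Γ, ≤)`: a 5-tuple `(f, g, u, v, w)`
with `u < w < v`, `f u > u` and `g v < v`, and positive integers `M, N` with
`f^N v < w < g^M u`. -/
def IsReinforcedCrossing {Γ : Type*} [Group Γ] [LinearOrder Γ] (f g u v w : Γ) : Prop :=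
  u < w ∧ w < v ∧ u < f * u ∧ g * v < v ∧
  ∃ M N : ℕ, 0 < M ∧ 0 < N ∧ f ^ N * v < w ∧ w < g ^ M * u

section PowMul

variable {M : Type*} [Monoid M] [Preorder M] [MulLeftMono M] {g u v : M}

theorem pow_mul_lt_of_mul_lt (h : g * v < v) {n : ℕ} (hn : 0 < n) : g ^ n * v < v := by
  induction n, hn using Nat.le_induction with
  | base => simpa using h
  | succ k _ ih =>
    calc g ^ (k + 1) * v = g ^ k * (g * v) := by rw [pow_succ, mul_assoc]
      _ ≤ g ^ k * v := mul_le_mul_right h.le _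
      _ < v := ih

theorem lt_pow_mul_of_lt_mul (h : u < g * u) {n : ℕ} (hn : 0 < n) : u < g ^ n * u := by
  induction n, hn using Nat.le_induction with
  | base => simpa using h
  | succ k _ ih =>
    calc u < g ^ k * u := ih
      _ ≤ g ^ k * (g * u) := mul_le_mul_right h.le _
      _ = g ^ (k + 1) * u := by rw [pow_succ, mul_assoc]

theorem pow_mul_lt_of_le_of_mul_lt (huv : u ≤ v) (h : g * v < v) {n : ℕ} (hn : 0 < n) :
    g ^ n * u < v :=
  (mul_le_mul_right huv _).trans_lt (pow_mul_lt_of_mul_lt h hn)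

theorem lt_pow_mul_of_le_of_lt_mul (huv : u ≤ v) (h : u < g * u) {n : ℕ} (hn : 0 < n) :
    u < g ^ n * v :=
  (lt_pow_mul_of_lt_mul h hn).trans_le (mul_le_mul_right huv _)

end PowMul

/-- Every reinforced crossing is a crossing. -/
theorem isCrossing_of_isReinforcedCrossing {Γ : Type*} [Group Γ] [LinearOrder Γ]
    [CovariantClass Γ Γ (· * ·) (· ≤ ·)] (f g u v w : Γ)
    (h : IsReinforcedCrossing f g u v w) : IsCrossing f g u v w := by
  obtain ⟨huw, hwv, hfu, hgv, hMN⟩ := h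
  have huv : u ≤ v := (huw.trans hwv).le
  exact ⟨huw, hwv, fun n hn ↦
    ⟨pow_mul_lt_of_le_of_mul_lt huv hgv hn, lt_pow_mul_of_le_of_lt_mul huv hfu hn⟩, hMN⟩
end

section
/- Let (Γ, ⪯) be a left-ordered group and let (f, g, u, v, w) be a crossing for (Γ, ⪯), with positive integers M, N such that f^N v ≺ w ≺ g^M u. Then the 5-tuple (f^N g^M, g^M f^N, f^N w, g^M w, w) is a reinforced crossing for (Γ, ⪯). -/
/-- If `(f, g, u, v, w)` is a crossing with `f^N v < w < g^M u` for positive `M, N`,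
then `(f^N g^M, g^M f^N, f^N w, g^M w, w)` is a reinforced crossing. -/
theorem isReinforcedCrossing_of_isCrossing {Γ : Type*} [Group Γ] [LinearOrder Γ]
    [CovariantClass Γ Γ (· * ·) (· ≤ ·)] (f g u v w : Γ) (M N : ℕ)
    (hM : 0 < M) (hN : 0 < N) (h : IsCrossing f g u v w)
    (h1 : f ^ N * v < w) (h2 : w < g ^ M * u) :
    IsReinforcedCrossing (f ^ N * g ^ M) (g ^ M * f ^ N) (f ^ N * w) (g ^ M * w) w := by
  obtain ⟨huw, hwv, hcross, -⟩ := h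
  have hlt : ∀ (c a b : Γ), a < b → c * a < c * b := fun c a b hab =>
    (mul_le_mul_right hab.le c).lt_of_ne (fun he => hab.ne (mul_left_cancel he))
  -- f^N w < w
  have hA : f ^ N * w < w := (hlt _ _ _ hwv).trans h1
  -- w < g^M w
  have hB : w < g ^ M * w := h2.trans (hlt _ _ _ huw)
  -- u < f^N w
  have huFw : u < f ^ N * w := by
    have := (hcross (2 * N) (by positivity)).2
    calc u < f ^ (2 * N) * v := this
      _ = f ^ N * (f ^ N * v) := by rw [two_mul, pow_add, mul_assoc]
      _ < f ^ N * w := hlt _ _ _ h1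
  -- g^M w < v
  have hGwv : g ^ M * w < v := by
    have := (hcross (2 * M) (by positivity)).1
    calc g ^ M * w < g ^ M * (g ^ M * u) := hlt _ _ _ h2
      _ = g ^ (2 * M) * u := by rw [two_mul, pow_add, mul_assoc]
      _ < v := this
  have huFFw : u < f ^ N * (f ^ N * w) := by
    have := (hcross (3 * N) (by positivity)).2
    calc u < f ^ (3 * N) * v := this
      _ = f ^ N * (f ^ N * (f ^ N * v)) := by
          rw [show 3 * N = N + (N + N) by ring, pow_add, pow_add, mul_assoc, mul_assoc]
      _ < f ^ N * (f ^ N * w) := hlt _ _ _ (hlt _ _ _ h1)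
  have hGGwv : g ^ M * (g ^ M * w) < v := by
    have := (hcross (3 * M) (by positivity)).1
    calc g ^ M * (g ^ M * w) < g ^ M * (g ^ M * (g ^ M * u)) :=
          hlt _ _ _ (hlt _ _ _ h2)
      _ = g ^ (3 * M) * u := by
          rw [show 3 * M = M + (M + M) by ring, pow_add, pow_add, mul_assoc, mul_assoc]
      _ < v := this
  refine ⟨hA, hB, ?_, ?_, 1, 1, one_pos, one_pos, ?_, ?_⟩
  · -- f^N w < (f^N g^M) (f^N w)
    have : w < g ^ M * (f ^ N * w) := h2.trans (hlt _ _ _ huFw)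
    calc f ^ N * w < f ^ N * (g ^ M * (f ^ N * w)) := hlt _ _ _ this
      _ = f ^ N * g ^ M * (f ^ N * w) := by rw [mul_assoc]
  · -- (g^M f^N) (g^M w) < g^M w
    have : f ^ N * (g ^ M * w) < w := (hlt _ _ _ hGwv).trans h1
    calc g ^ M * f ^ N * (g ^ M * w) = g ^ M * (f ^ N * (g ^ M * w)) := by rw [mul_assoc]
      _ < g ^ M * w := hlt _ _ _ this
  · -- (f^N g^M)^1 (g^M w) < w
    calc (f ^ N * g ^ M) ^ 1 * (g ^ M * w) = f ^ N * (g ^ M * (g ^ M * w)) := by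
          rw [pow_one, mul_assoc]
      _ < f ^ N * v := hlt _ _ _ hGGwv
      _ < w := h1
  · -- w < (g^M f^N)^1 (f^N w)
    calc w < g ^ M * u := h2
      _ < g ^ M * (f ^ N * (f ^ N * w)) := hlt _ _ _ huFFw
      _ = (g ^ M * f ^ N) ^ 1 * (f ^ N * w) := by rw [pow_one, mul_assoc]
end

section
/- Let (Γ, ⪯) be a left-ordered group and let (G, H) be a convex jump in Γ, i.e. H ⊊ G are ⪯-convex subgroups of Γ and there is no ⪯-convex subgroup K with H ⊊ K ⊊ G. Suppose G is a ⪯-Conradian extension of H. Then H is a normal subgroup of G, and the induced ordering on the quotient G/H is Archimedean: for every f ∈ G \ H and every g ∈ G there exists an integer n such that f^n ≻ g. -/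
/-- A subgroup `C` of a left-ordered group is `≤`-convex if whenever
`c₁, c₂ ∈ C` and `c₁ < f < c₂`, one has `f ∈ C`. -/
def IsConvexSubgroup {Γ : Type*} [Group Γ] [LinearOrder Γ] (C : Subgroup Γ) : Prop :=
  ∀ c₁ ∈ C, ∀ c₂ ∈ C, ∀ f : Γ, c₁ < f → f < c₂ → f ∈ C

/-- The induced strict order on left cosets of a (convex) subgroup `H`:
`xH < yH` iff `xH ≠ yH` and `x < y`. -/
def CosetLT {Γ : Type*} [Group Γ] [LinearOrder Γ] (H : Subgroup Γ) (x y : Γ) : Prop :=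
  x⁻¹ * y ∉ H ∧ x < y

/-- A crossing for the action of the group on the space of left cosets of `H`
(cosets represented by group elements). -/
def CosetCrossing {Γ : Type*} [Group Γ] [LinearOrder Γ] (H : Subgroup Γ)
    (f g u v w : Γ) : Prop :=
  CosetLT H u w ∧ CosetLT H w v ∧
  (∀ n : ℕ, 0 < n → CosetLT H (g ^ n * u) v ∧ CosetLT H u (f ^ n * v)) ∧
  ∃ M N : ℕ, 0 < M ∧ 0 < N ∧ CosetLT H (f ^ N * v) w ∧ CosetLT H w (g ^ M * u)

/-- `G` is a `≤`-Conradian extension of `H` if the action of `G` by left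
translations on the ordered coset space `G/H` admits no crossing. -/
def IsConradianExtension {Γ : Type*} [Group Γ] [LinearOrder Γ] (G H : Subgroup Γ) : Prop :=
  ∀ f g u v w : Γ, f ∈ G → g ∈ G → u ∈ G → v ∈ G → w ∈ G →
    ¬ CosetCrossing H f g u v w

namespace ConradAux
set_option linter.unusedSectionVars false

variable {Γ : Type*} [Group Γ] [LinearOrder Γ] [CovariantClass Γ Γ (· * ·) (· ≤ ·)]
variable {H G : Subgroup Γ}

theorem mulLtL (c : Γ) {a b : Γ} (h : a < b) : c * a < c * b := by
  rcases (mul_le_mul_right h.le c).lt_or_eq with h' | h'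
  · exact h'
  · exact absurd (mul_left_cancel h') h.ne

theorem cltAct (z : Γ) {x y : Γ} (h : CosetLT H x y) : CosetLT H (z * x) (z * y) := by
  refine ⟨?_, mulLtL z h.2⟩
  have e : (z * x)⁻¹ * (z * y) = x⁻¹ * y := by group
  rw [e]; exact h.1

theorem clt_asymm {x y : Γ} (h1 : CosetLT H x y) (h2 : CosetLT H y x) : False :=
  absurd h1.2 (not_lt.2 h2.2.le)

theorem memL1 (hHconv : IsConvexSubgroup H) {b h : Γ} (hb : b ∉ H) (h1 : (1:Γ) < b)
    (hh : h ∈ H) : h < b := by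
  by_contra hc
  rcases (not_lt.1 hc).lt_or_eq with h' | h'
  · exact hb (hHconv 1 (one_mem H) h hh b h1 h')
  · exact hb (h' ▸ hh)

theorem memL2 (hHconv : IsConvexSubgroup H) {b h : Γ} (hb : b ∉ H) (h1 : (1:Γ) < b)
    (hh : h ∈ H) : b⁻¹ < h := by
  have hb1 : b⁻¹ < 1 := by
    have := mulLtL b⁻¹ h1
    simpa using this
  by_contra hc
  have hbinv : b⁻¹ ∉ H := fun hm => hb (by simpa using inv_mem hm)
  rcases (not_lt.1 hc).lt_or_eq with h' | h'
  · exact hbinv (hHconv h hh 1 (one_mem H) b⁻¹ h' hb1)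
  · exact hbinv (h' ▸ hh)

theorem clt_congr_left (hHconv : IsConvexSubgroup H) {x y z : Γ}
    (hm : x⁻¹ * y ∈ H) (h : CosetLT H y z) : CosetLT H x z := by
  constructor
  · intro hc
    have e : y⁻¹ * z = (x⁻¹ * y)⁻¹ * (x⁻¹ * z) := by group
    exact h.1 (e ▸ mul_mem (inv_mem hm) hc)
  · have hb1 : (1:Γ) < y⁻¹ * z := by
      have := mulLtL y⁻¹ h.2; simpa using this
    have hlt : (x⁻¹ * y)⁻¹ < y⁻¹ * z := memL1 hHconv h.1 hb1 (inv_mem hm)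
    have h2 : (1:Γ) < x⁻¹ * z := by
      have h3 := mulLtL (x⁻¹ * y) hlt
      have e1 : (x⁻¹ * y) * (x⁻¹ * y)⁻¹ = 1 := by group
      have e2 : (x⁻¹ * y) * (y⁻¹ * z) = x⁻¹ * z := by group
      rwa [e1, e2] at h3
    have h4 := mulLtL x h2
    simpa using h4

theorem clt_congr_right (hHconv : IsConvexSubgroup H) {x y z : Γ}
    (h : CosetLT H x y) (hm : y⁻¹ * z ∈ H) : CosetLT H x z := by
  constructor
  · intro hc
    have e : x⁻¹ * y = (x⁻¹ * z) * (y⁻¹ * z)⁻¹ := by group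
    exact h.1 (e ▸ mul_mem hc (inv_mem hm))
  · have hb1 : (1:Γ) < x⁻¹ * y := by
      have := mulLtL x⁻¹ h.2; simpa using this
    have hlt : (x⁻¹ * y)⁻¹ < y⁻¹ * z := memL2 hHconv h.1 hb1 hm
    have h2 : (1:Γ) < x⁻¹ * z := by
      have h3 := mulLtL (x⁻¹ * y) hlt
      have e1 : (x⁻¹ * y) * (x⁻¹ * y)⁻¹ = 1 := by group
      have e2 : (x⁻¹ * y) * (y⁻¹ * z) = x⁻¹ * z := by group
      rwa [e1, e2] at h3
    have h4 := mulLtL x h2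
    simpa using h4

theorem clt_trans (hHconv : IsConvexSubgroup H) {x y z : Γ}
    (h1 : CosetLT H x y) (h2 : CosetLT H y z) : CosetLT H x z := by
  by_cases hc : x⁻¹ * z ∈ H
  · exfalso
    have hm : z⁻¹ * x ∈ H := by
      have e : z⁻¹ * x = (x⁻¹ * z)⁻¹ := by group
      exact e ▸ inv_mem hc
    exact clt_asymm h1 (clt_congr_right hHconv h2 hm)
  · exact ⟨hc, h1.2.trans h2.2⟩

theorem clt_total {x y : Γ} (hne : x⁻¹ * y ∉ H) : CosetLT H x y ∨ CosetLT H y x := by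
  rcases lt_trichotomy x y with h | h | h
  · exact Or.inl ⟨hne, h⟩
  · subst h
    exact absurd (by simpa using one_mem H) hne
  · refine Or.inr ⟨?_, h⟩
    intro hc
    have e : x⁻¹ * y = (y⁻¹ * x)⁻¹ := by group
    exact hne (e ▸ inv_mem hc)

theorem cltT1 (hHconv : IsConvexSubgroup H) {x y z : Γ}
    (h1 : CosetLT H x y) (h2 : ¬ CosetLT H z y) : CosetLT H x z := by
  by_cases hm : y⁻¹ * z ∈ H
  · exact clt_congr_right hHconv h1 hm
  · rcases clt_total hm with h | h
    · exact clt_trans hHconv h1 h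
    · exact absurd h h2

theorem cltT2 (hHconv : IsConvexSubgroup H) {x y z : Γ}
    (h1 : ¬ CosetLT H y x) (h2 : CosetLT H y z) : CosetLT H x z := by
  by_cases hm : x⁻¹ * y ∈ H
  · exact clt_congr_left hHconv hm h2
  · rcases clt_total hm with h | h
    · exact clt_trans hHconv h h2
    · exact absurd h h1

theorem master (hHconv : IsConvexSubgroup H) (hext : IsConradianExtension G H)
    {u v : Γ} (hu : u ∈ G) (hv : v ∈ G)
    (h1u : CosetLT H 1 u) (h1v : CosetLT H 1 v) :
    ¬ CosetLT H (u * (v * v)) v := by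
  intro hass
  have hvv : CosetLT H v (v * v) := by simpa using cltAct v h1v
  have h1vv : CosetLT H 1 (v * v) := clt_trans hHconv h1v hvv
  have huv : CosetLT H u v := by
    have h1 : CosetLT H u (u * (v * v)) := by simpa using cltAct u h1vv
    exact clt_trans hHconv h1 hass
  have lemA : ∀ x : Γ, CosetLT H x (v * v) → CosetLT H (v * (u * x)) (v * v) := by
    intro x hx
    have h2 : CosetLT H (u * x) (u * (v * v)) := cltAct u hx
    have h3 : CosetLT H (u * x) v := clt_trans hHconv h2 hass
    exact cltAct v h3
  have orbit1 : ∀ n : ℕ, CosetLT H ((v * u) ^ (n + 1) * 1) (v * v) := by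
    intro n
    induction n with
    | zero => simpa using cltAct v huv
    | succ k ih =>
      have h2 : CosetLT H ((v * u) ^ (k + 1)) (v * v) := by simpa using ih
      have h3 := lemA _ h2
      have e : (v * u) ^ (k + 1 + 1) * 1 = v * (u * (v * u) ^ (k + 1)) := by
        rw [mul_one, pow_succ']; group
      rw [e]; exact h3
  have upow : ∀ n : ℕ, CosetLT H 1 (u ^ (n + 1)) := by
    intro n
    induction n with
    | zero => simpa using h1u
    | succ k ih =>
      have h2 : CosetLT H u (u * u ^ (k + 1)) := by simpa using cltAct u ih
      have h3 := clt_trans hHconv h1u h2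
      have e : u ^ (k + 1 + 1) = u * u ^ (k + 1) := pow_succ' u (k+1)
      rw [e]; exact h3
  have orbit2 : ∀ n : ℕ, CosetLT H 1 (u ^ (n + 1) * (v * v)) := by
    intro n
    have h2 : CosetLT H (u ^ (n + 1)) (u ^ (n + 1) * (v * v)) := by
      simpa using cltAct (u ^ (n + 1)) h1vv
    exact clt_trans hHconv (upow n) h2
  refine hext u (v * u) 1 (v * v) v hu (mul_mem hv hu) (one_mem G) (mul_mem hv hv) hv
    ⟨h1v, hvv, ?_, 1, 1, one_pos, one_pos, ?_, ?_⟩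
  · intro n hn
    cases n with
    | zero => omega
    | succ k => exact ⟨orbit1 k, orbit2 k⟩
  · simpa using hass
  · simpa using cltAct v h1u

theorem master_dual (hHconv : IsConvexSubgroup H) (hext : IsConradianExtension G H)
    {u v : Γ} (hu : u ∈ G) (hv : v ∈ G)
    (h1u : CosetLT H u 1) (h1v : CosetLT H v 1) :
    ¬ CosetLT H v (u * (v * v)) := by
  intro hass
  have hvv : CosetLT H (v * v) v := by simpa using cltAct v h1v
  have hvv1 : CosetLT H (v * v) 1 := clt_trans hHconv hvv h1v
  have hvu : CosetLT H v u := by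
    have h1 : CosetLT H (u * (v * v)) u := by simpa using cltAct u hvv1
    exact clt_trans hHconv hass h1
  have lemA : ∀ x : Γ, CosetLT H (v * v) x → CosetLT H (v * v) (v * (u * x)) := by
    intro x hx
    have h2 : CosetLT H (u * (v * v)) (u * x) := cltAct u hx
    have h3 : CosetLT H v (u * x) := clt_trans hHconv hass h2
    exact cltAct v h3
  have orbit1 : ∀ n : ℕ, CosetLT H (v * v) ((v * u) ^ (n + 1) * 1) := by
    intro n
    induction n with
    | zero => simpa using cltAct v hvu
    | succ k ih =>
      have h2 : CosetLT H (v * v) ((v * u) ^ (k + 1)) := by simpa using ih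
      have h3 := lemA _ h2
      have e : (v * u) ^ (k + 1 + 1) * 1 = v * (u * (v * u) ^ (k + 1)) := by
        rw [mul_one, pow_succ']; group
      rw [e]; exact h3
  have upow : ∀ n : ℕ, CosetLT H (u ^ (n + 1)) 1 := by
    intro n
    induction n with
    | zero => simpa using h1u
    | succ k ih =>
      have h2 : CosetLT H (u * u ^ (k + 1)) u := by simpa using cltAct u ih
      have h3 := clt_trans hHconv h2 h1u
      have e : u ^ (k + 1 + 1) = u * u ^ (k + 1) := pow_succ' u (k+1)
      rw [e]; exact h3
  have orbit2 : ∀ n : ℕ, CosetLT H (u ^ (n + 1) * (v * v)) 1 := by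
    intro n
    have h2 : CosetLT H (u ^ (n + 1) * (v * v)) (u ^ (n + 1)) := by
      simpa using cltAct (u ^ (n + 1)) hvv1
    exact clt_trans hHconv h2 (upow n)
  refine hext (v * u) u (v * v) 1 v (mul_mem hv hu) hu (mul_mem hv hv) (one_mem G) hv
    ⟨hvv, h1v, ?_, 1, 1, one_pos, one_pos, ?_, ?_⟩
  · intro n hn
    cases n with
    | zero => omega
    | succ k => exact ⟨by simpa using orbit2 k, by simpa using orbit1 k⟩
  · simpa using cltAct v h1u
  · simpa using hass

section Ladder

variable {a : Γ}

theorem powLT (hHconv : IsConvexSubgroup H) (h1a : CosetLT H 1 a) :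
    ∀ {i j : ℤ}, i < j → CosetLT H (a ^ i) (a ^ j) := by
  have hpos : ∀ k : ℕ, CosetLT H 1 (a ^ ((k : ℤ) + 1)) := by
    intro k
    induction k with
    | zero => simpa using h1a
    | succ m ih =>
      have h2 : CosetLT H (a ^ ((m : ℤ) + 1)) (a ^ ((m : ℤ) + 1) * a) := by
        simpa using cltAct (a ^ ((m : ℤ) + 1)) h1a
      have h3 := clt_trans hHconv ih h2
      have e : (((m + 1 : ℕ) : ℤ) + 1) = ((m : ℤ) + 1) + 1 := by push_cast; ring
      rw [e, zpow_add_one]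
      exact h3
  intro i j hij
  have hk : CosetLT H 1 (a ^ (j - i)) := by
    have e : j - i = ((j - i - 1).toNat : ℤ) + 1 := by
      rw [Int.toNat_of_nonneg (by omega)]; ring
    rw [e]; exact hpos _
  have h2 : CosetLT H (a ^ i * 1) (a ^ i * a ^ (j - i)) := cltAct _ hk
  have e2 : a ^ i * a ^ (j - i) = a ^ j := by rw [← zpow_add]; congr 1; ring
  rw [mul_one, e2] at h2; exact h2

theorem upperMono (hHconv : IsConvexSubgroup H) (h1a : CosetLT H 1 a) {x : Γ} {i j : ℤ}
    (hij : i ≤ j) (h : CosetLT H x (a ^ i)) : CosetLT H x (a ^ j) := by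
  rcases hij.lt_or_eq with h' | h'
  · exact clt_trans hHconv h (powLT hHconv h1a h')
  · rwa [h'] at h

theorem lowerMono (hHconv : IsConvexSubgroup H) (h1a : CosetLT H 1 a) {x : Γ} {i j : ℤ}
    (hij : j ≤ i) (h : CosetLT H (a ^ i) x) : CosetLT H (a ^ j) x := by
  rcases hij.lt_or_eq with h' | h'
  · exact clt_trans hHconv (powLT hHconv h1a h') h
  · rwa [← h'] at h

theorem stepUp (hHconv : IsConvexSubgroup H) (hext : IsConradianExtension G H)
    (haG : a ∈ G) (h1a : CosetLT H 1 a) {w : Γ} (hw : w ∈ G) (e : ℤ)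
    (h : CosetLT H w (a ^ e)) : CosetLT H (w * a) (a ^ (e + 3)) := by
  have h1u : CosetLT H 1 (w⁻¹ * a ^ e) := by
    have := cltAct w⁻¹ h; simpa using this
  have hm := master hHconv hext (mul_mem (inv_mem hw) (zpow_mem haG e)) haG h1u h1a
  have heq : (w⁻¹ * a ^ e) * (a * a) = w⁻¹ * a ^ (e + 2) := by
    rw [show e + 2 = e + 1 + 1 by ring, zpow_add_one, zpow_add_one]; group
  rw [heq] at hm
  have h2 : CosetLT H (w⁻¹ * a ^ (e + 2)) ((w⁻¹ * a ^ (e + 2)) * a) := by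
    simpa using cltAct (w⁻¹ * a ^ (e + 2)) h1a
  have h3 : CosetLT H a ((w⁻¹ * a ^ (e + 2)) * a) := cltT2 hHconv hm h2
  have h4 := cltAct w h3
  have e2 : w * ((w⁻¹ * a ^ (e + 2)) * a) = a ^ (e + 2) * a := by group
  have e3 : a ^ (e + 2) * a = a ^ (e + 3) := by
    rw [show e + 3 = (e + 2) + 1 by ring]; exact (zpow_add_one a (e + 2)).symm
  rw [e2, e3] at h4
  exact h4

theorem iterUp (hHconv : IsConvexSubgroup H) (hext : IsConradianExtension G H)
    (haG : a ∈ G) (h1a : CosetLT H 1 a) (m : ℕ) {w : Γ} (hw : w ∈ G) {e : ℤ}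
    (h : CosetLT H w (a ^ e)) : CosetLT H (w * a ^ (m : ℤ)) (a ^ (e + 3 * m)) := by
  induction m with
  | zero => simpa using h
  | succ k ih =>
    have hwk : w * a ^ (k : ℤ) ∈ G := mul_mem hw (zpow_mem haG _)
    have h2 := stepUp hHconv hext haG h1a hwk (e + 3 * k) ih
    have e1 : (w * a ^ (k : ℤ)) * a = w * a ^ ((k + 1 : ℕ) : ℤ) := by
      push_cast; rw [zpow_add_one]; group
    have e2 : (e + 3 * (k : ℤ)) + 3 = e + 3 * ((k + 1 : ℕ) : ℤ) := by push_cast; ring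
    rw [e1, e2] at h2; exact h2

theorem stepDown (hHconv : IsConvexSubgroup H) (hext : IsConradianExtension G H)
    (haG : a ∈ G) (h1a : CosetLT H 1 a) {w : Γ} (hw : w ∈ G) (e : ℤ)
    (h : CosetLT H (a ^ e) w) : CosetLT H (a ^ (e - 3)) (w * a⁻¹) := by
  have h1u : CosetLT H (w⁻¹ * a ^ e) 1 := by
    have := cltAct w⁻¹ h; simpa using this
  have ha1 : CosetLT H a⁻¹ 1 := by simpa using cltAct a⁻¹ h1a
  have hm := master_dual hHconv hext (mul_mem (inv_mem hw) (zpow_mem haG e)) (inv_mem haG) h1u ha1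
  have heq : (w⁻¹ * a ^ e) * (a⁻¹ * a⁻¹) = w⁻¹ * a ^ (e - 2) := by
    rw [show e - 2 = e - 1 - 1 by ring, zpow_sub_one, zpow_sub_one]; group
  rw [heq] at hm
  have h2 : CosetLT H ((w⁻¹ * a ^ (e - 2)) * a⁻¹) (w⁻¹ * a ^ (e - 2)) := by
    simpa using cltAct (w⁻¹ * a ^ (e - 2)) ha1
  have h3 : CosetLT H ((w⁻¹ * a ^ (e - 2)) * a⁻¹) a⁻¹ := cltT1 hHconv h2 hm
  have h4 := cltAct w h3
  have e2 : w * ((w⁻¹ * a ^ (e - 2)) * a⁻¹) = a ^ (e - 2) * a⁻¹ := by group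
  have e3 : a ^ (e - 2) * a⁻¹ = a ^ (e - 3) := by
    rw [show e - 3 = (e - 2) - 1 by ring]; exact (zpow_sub_one a (e - 2)).symm
  rw [e2, e3] at h4
  have e4 : w * a⁻¹ = w * a⁻¹ := rfl
  exact h4

theorem iterDown (hHconv : IsConvexSubgroup H) (hext : IsConradianExtension G H)
    (haG : a ∈ G) (h1a : CosetLT H 1 a) (m : ℕ) {w : Γ} (hw : w ∈ G) {e : ℤ}
    (h : CosetLT H (a ^ e) w) : CosetLT H (a ^ (e - 3 * m)) (w * a ^ (-(m : ℤ))) := by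
  induction m with
  | zero => simpa using h
  | succ k ih =>
    have hwk : w * a ^ (-(k : ℤ)) ∈ G := mul_mem hw (zpow_mem haG _)
    have h2 := stepDown hHconv hext haG h1a hwk (e - 3 * k) ih
    have e1 : (w * a ^ (-(k : ℤ))) * a⁻¹ = w * a ^ (-((k + 1 : ℕ) : ℤ)) := by
      push_cast
      rw [show -((k : ℤ) + 1) = -(k : ℤ) - 1 by ring, zpow_sub_one]
      group
    have e2 : (e - 3 * (k : ℤ)) - 3 = e - 3 * ((k + 1 : ℕ) : ℤ) := by push_cast; ring
    rw [e1, e2] at h2; exact h2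

theorem stepC (hHconv : IsConvexSubgroup H) (hext : IsConradianExtension G H)
    (haG : a ∈ G) (h1a : CosetLT H 1 a) {w : Γ} (hw : w ∈ G) (e : ℤ)
    (h : CosetLT H 1 (w * a ^ e)) : CosetLT H 1 ((a⁻¹ * w) * a ^ (e + 3)) := by
  have hm := master hHconv hext (mul_mem hw (zpow_mem haG e)) haG h h1a
  have heq : (w * a ^ e) * (a * a) = w * a ^ (e + 2) := by
    rw [show e + 2 = e + 1 + 1 by ring, zpow_add_one, zpow_add_one]; group
  rw [heq] at hm
  have hne : ¬ CosetLT H (a⁻¹ * (w * a ^ (e + 2))) 1 := by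
    intro hc
    have h5 := cltAct a hc
    apply hm
    have e1 : a * (a⁻¹ * (w * a ^ (e + 2))) = w * a ^ (e + 2) := by group
    rw [e1, mul_one] at h5; exact h5
  have h2 : CosetLT H (a⁻¹ * (w * a ^ (e + 2))) ((a⁻¹ * (w * a ^ (e + 2))) * a) := by
    simpa using cltAct (a⁻¹ * (w * a ^ (e + 2))) h1a
  have h3 := cltT2 hHconv hne h2
  have e2 : (a⁻¹ * (w * a ^ (e + 2))) * a = (a⁻¹ * w) * a ^ (e + 3) := by
    rw [show e + 3 = (e + 2) + 1 by ring, zpow_add_one]; group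
  rw [e2] at h3; exact h3

theorem stepC' (hHconv : IsConvexSubgroup H) (hext : IsConradianExtension G H)
    (haG : a ∈ G) (h1a : CosetLT H 1 a) {w : Γ} (hw : w ∈ G) (e : ℤ)
    (h : CosetLT H (w * a ^ e) 1) : CosetLT H ((a * w) * a ^ (e - 3)) 1 := by
  have ha1 : CosetLT H a⁻¹ 1 := by simpa using cltAct a⁻¹ h1a
  have hm := master_dual hHconv hext (mul_mem hw (zpow_mem haG e)) (inv_mem haG) h ha1
  have heq : (w * a ^ e) * (a⁻¹ * a⁻¹) = w * a ^ (e - 2) := by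
    rw [show e - 2 = e - 1 - 1 by ring, zpow_sub_one, zpow_sub_one]; group
  rw [heq] at hm
  have hne : ¬ CosetLT H 1 (a * (w * a ^ (e - 2))) := by
    intro hc
    have h5 := cltAct a⁻¹ hc
    apply hm
    have e1 : a⁻¹ * (a * (w * a ^ (e - 2))) = w * a ^ (e - 2) := by group
    rw [e1, mul_one] at h5; exact h5
  have h2 : CosetLT H ((a * (w * a ^ (e - 2))) * a⁻¹) (a * (w * a ^ (e - 2))) := by
    simpa using cltAct (a * (w * a ^ (e - 2))) ha1
  have h3 := cltT1 hHconv h2 hne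
  have e2 : (a * (w * a ^ (e - 2))) * a⁻¹ = (a * w) * a ^ (e - 3) := by
    rw [show e - 3 = (e - 2) - 1 by ring, zpow_sub_one]; group
  rw [e2] at h3; exact h3

theorem cascade_low (hHconv : IsConvexSubgroup H) (hext : IsConradianExtension G H)
    (haG : a ∈ G) (h1a : CosetLT H 1 a) {x : Γ} (hx : x ∈ G) {n : ℕ}
    (hub : CosetLT H x (a ^ (n : ℤ))) : ∃ K : ℤ, CosetLT H (a ^ K) x⁻¹ := by
  by_contra hcon
  push_neg at hcon
  have hstrict : ∀ K : ℤ, CosetLT H 1 (x * a ^ K) := by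
    intro K
    by_cases hmem : (a ^ K)⁻¹ * x⁻¹ ∈ H
    · exfalso
      have h1 : CosetLT H (a ^ (K - 1)) (a ^ K) := powLT hHconv h1a (by omega)
      exact hcon _ (clt_congr_right hHconv h1 hmem)
    · rcases clt_total hmem with hlt | hlt
      · exact absurd hlt (hcon K)
      · have := cltAct x hlt
        simpa using this
  have inv : ∀ j : ℕ, CosetLT H 1 ((a ^ (-(j : ℤ)) * x) * a ^ (-(3 * (n : ℤ) + 3) + 3 * j)) := by
    intro j
    induction j with
    | zero => simpa using hstrict (-(3 * (n : ℤ) + 3))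
    | succ k ih =>
      have hwk : a ^ (-(k : ℤ)) * x ∈ G := mul_mem (zpow_mem haG _) hx
      have h2 := stepC hHconv hext haG h1a hwk _ ih
      have e1 : a⁻¹ * (a ^ (-(k : ℤ)) * x) = a ^ (-((k + 1 : ℕ) : ℤ)) * x := by
        push_cast
        rw [show -((k : ℤ) + 1) = -1 + -(k : ℤ) by ring, zpow_add, zpow_neg_one]
        group
      have e2 : (-(3 * (n : ℤ) + 3) + 3 * (k : ℤ)) + 3
          = -(3 * (n : ℤ) + 3) + 3 * ((k + 1 : ℕ) : ℤ) := by push_cast; ring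
      rw [e1, e2] at h2; exact h2
  have hterm := inv n
  rw [show (-(3 * (n : ℤ) + 3) + 3 * (n : ℤ)) = -3 by ring] at hterm
  have hs1 : CosetLT H (a ^ (-(n : ℤ)) * x) 1 := by
    have h5 := cltAct (a ^ (-(n : ℤ))) hub
    have e4 : a ^ (-(n : ℤ)) * a ^ ((n : ℤ)) = 1 := by rw [← zpow_add]; simp
    rwa [e4] at h5
  have hs2 : CosetLT H ((a ^ (-(n : ℤ)) * x) * a ^ (-3 : ℤ)) (a ^ (-(n : ℤ)) * x) := by
    have hneg : CosetLT H (a ^ (-3 : ℤ)) 1 := by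
      have := powLT hHconv h1a (show (-3 : ℤ) < 0 by norm_num)
      simpa using this
    simpa using cltAct (a ^ (-(n : ℤ)) * x) hneg
  exact clt_asymm hterm (clt_trans hHconv hs2 hs1)

theorem cascade_up (hHconv : IsConvexSubgroup H) (hext : IsConradianExtension G H)
    (haG : a ∈ G) (h1a : CosetLT H 1 a) {x : Γ} (hx : x ∈ G) {n : ℕ}
    (hlb : CosetLT H (a ^ (-(n : ℤ))) x) : ∃ K : ℤ, CosetLT H x⁻¹ (a ^ K) := by
  by_contra hcon
  push_neg at hcon
  have hstrict : ∀ K : ℤ, CosetLT H (x * a ^ K) 1 := by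
    intro K
    by_cases hmem : (x⁻¹)⁻¹ * a ^ K ∈ H
    · exfalso
      have h1 : CosetLT H (a ^ K) (a ^ (K + 1)) := powLT hHconv h1a (by omega)
      exact hcon _ (clt_congr_left hHconv hmem h1)
    · rcases clt_total hmem with hlt | hlt
      · exact absurd hlt (hcon K)
      · have := cltAct x hlt
        simpa using this
  have inv : ∀ j : ℕ, CosetLT H ((a ^ ((j : ℤ)) * x) * a ^ ((3 * (n : ℤ) + 3) - 3 * j)) 1 := by
    intro j
    induction j with
    | zero => simpa using hstrict (3 * (n : ℤ) + 3)
    | succ k ih =>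
      have hwk : a ^ ((k : ℤ)) * x ∈ G := mul_mem (zpow_mem haG _) hx
      have h2 := stepC' hHconv hext haG h1a hwk _ ih
      have e1 : a * (a ^ ((k : ℤ)) * x) = a ^ (((k + 1 : ℕ)) : ℤ) * x := by
        push_cast
        rw [show (k : ℤ) + 1 = 1 + (k : ℤ) by ring, zpow_add, zpow_one]
        group
      have e2 : ((3 * (n : ℤ) + 3) - 3 * (k : ℤ)) - 3
          = (3 * (n : ℤ) + 3) - 3 * ((k + 1 : ℕ) : ℤ) := by push_cast; ring
      rw [e1, e2] at h2; exact h2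
  have hterm := inv n
  rw [show ((3 * (n : ℤ) + 3) - 3 * (n : ℤ)) = 3 by ring] at hterm
  have hs1 : CosetLT H 1 (a ^ ((n : ℤ)) * x) := by
    have h5 := cltAct (a ^ ((n : ℤ))) hlb
    have e4 : a ^ ((n : ℤ)) * a ^ (-(n : ℤ)) = 1 := by rw [← zpow_add]; simp
    rwa [e4] at h5
  have hs2 : CosetLT H (a ^ ((n : ℤ)) * x) ((a ^ ((n : ℤ)) * x) * a ^ (3 : ℤ)) := by
    have hpos3 : CosetLT H 1 (a ^ (3 : ℤ)) := by
      have := powLT hHconv h1a (show (0 : ℤ) < 3 by norm_num)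
      simpa using this
    simpa using cltAct (a ^ ((n : ℤ)) * x) hpos3
  exact clt_asymm (clt_trans hHconv hs1 hs2) hterm

end Ladder

end ConradAux

/-- If `(G, H)` is a convex jump in a left-ordered group and `G` is a Conradian
extension of `H`, then `H` is normal in `G` and the induced ordering on `G/H` is
Archimedean. -/
theorem convex_jump_normal_archimedean (Γ : Type*) [Group Γ] [LinearOrder Γ]
    [CovariantClass Γ Γ (· * ·) (· ≤ ·)] (G H : Subgroup Γ)
    (hHG : H ≤ G) (hne : H ≠ G)
    (hHconv : IsConvexSubgroup H) (hGconv : IsConvexSubgroup G)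
    (hjump : ∀ K : Subgroup Γ, IsConvexSubgroup K → H ≤ K → K ≤ G → K = H ∨ K = G)
    (hext : IsConradianExtension G H) :
    (∀ h ∈ H, ∀ g ∈ G, g * h * g⁻¹ ∈ H) ∧
    (∀ f ∈ G, f ∉ H → ∀ g ∈ G, ∃ n : ℤ, g < f ^ n) := by
  classical
  have core : ∀ a : Γ, a ∈ G → a ∉ H → 1 < a → ∀ g ∈ G, ∃ n : ℕ,
      CosetLT H (a ^ (-(n : ℤ))) g ∧ CosetLT H g (a ^ (n : ℤ)) := by
    intro a haG haH h1a' g hg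
    have h1a : CosetLT H 1 a := ⟨by simpa using haH, h1a'⟩
    let K : Subgroup Γ :=
      { carrier := {x | ∃ n : ℕ, CosetLT H (a ^ (-(n : ℤ))) x ∧ CosetLT H x (a ^ (n : ℤ))}
        one_mem' := by
          refine ⟨1, ?_, ?_⟩
          · have := ConradAux.powLT (H := H) hHconv h1a (show -((1:ℕ):ℤ) < 0 by norm_num)
            simpa using this
          · have := ConradAux.powLT (H := H) hHconv h1a (show (0:ℤ) < ((1:ℕ):ℤ) by norm_num)
            simpa using this
        mul_mem' := by
          rintro x y ⟨n, hx1, hx2⟩ ⟨m, hy1, hy2⟩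
          have hxG : x ∈ G := hGconv _ (zpow_mem haG _) _ (zpow_mem haG _) x hx1.2 hx2.2
          refine ⟨n + 3 * m, ?_, ?_⟩
          · have h1 : CosetLT H (x * a ^ (-(m : ℤ))) (x * y) := ConradAux.cltAct x hy1
            have h2 : CosetLT H (a ^ ((-(n : ℤ)) - 3 * m)) (x * a ^ (-(m : ℤ))) :=
              ConradAux.iterDown hHconv hext haG h1a m hxG hx1
            have h3 := ConradAux.clt_trans hHconv h2 h1
            have e : (-(((n + 3 * m : ℕ)) : ℤ)) = (-(n : ℤ)) - 3 * m := by push_cast; ring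
            rw [e]; exact h3
          · have h1 : CosetLT H (x * y) (x * a ^ ((m : ℤ))) := ConradAux.cltAct x hy2
            have h2 : CosetLT H (x * a ^ ((m : ℤ))) (a ^ ((n : ℤ) + 3 * m)) :=
              ConradAux.iterUp hHconv hext haG h1a m hxG hx2
            have h3 := ConradAux.clt_trans hHconv h1 h2
            have e : (((n + 3 * m : ℕ)) : ℤ) = (n : ℤ) + 3 * m := by push_cast; ring
            rw [e]; exact h3
        inv_mem' := by
          rintro x ⟨n, hx1, hx2⟩
          have hxG : x ∈ G := hGconv _ (zpow_mem haG _) _ (zpow_mem haG _) x hx1.2 hx2.2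
          obtain ⟨K1, hK1⟩ := ConradAux.cascade_low hHconv hext haG h1a hxG hx2
          obtain ⟨K2, hK2⟩ := ConradAux.cascade_up hHconv hext haG h1a hxG hx1
          refine ⟨K1.natAbs + K2.natAbs + 1, ?_, ?_⟩
          · refine ConradAux.lowerMono hHconv h1a ?_ hK1
            push_cast
            linarith [neg_abs_le K1, abs_nonneg K2]
          · refine ConradAux.upperMono hHconv h1a ?_ hK2
            push_cast
            linarith [le_abs_self K2, abs_nonneg K1] }
    have hmemK : ∀ x : Γ, x ∈ K ↔
        ∃ n : ℕ, CosetLT H (a ^ (-(n : ℤ))) x ∧ CosetLT H x (a ^ (n : ℤ)) := fun x => Iff.rfl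
    have hHK : H ≤ K := by
      intro h hh
      rw [hmemK]
      have e1 : (a : Γ) ^ (-((1 : ℕ) : ℤ)) = a⁻¹ := by norm_num
      have e2 : (a : Γ) ^ (((1 : ℕ)) : ℤ) = a := by norm_num
      refine ⟨1, ?_, ?_⟩
      · rw [e1]
        refine ⟨?_, ConradAux.memL2 hHconv haH h1a' hh⟩
        intro hc
        refine haH ?_
        have e3 : a = ((a⁻¹)⁻¹ * h) * h⁻¹ := by group
        rw [e3]; exact mul_mem hc (inv_mem hh)
      · rw [e2]
        refine ⟨?_, ConradAux.memL1 hHconv haH h1a' hh⟩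
        intro hc
        refine haH ?_
        have e3 : a = h * (h⁻¹ * a) := by group
        rw [e3]; exact mul_mem hh hc
    have hKconv : IsConvexSubgroup K := by
      intro c₁ hc₁ c₂ hc₂ x hl hr
      rw [hmemK] at hc₁ hc₂ ⊢
      obtain ⟨n₁, h11, h12⟩ := hc₁
      obtain ⟨n₂, h21, h22⟩ := hc₂
      refine ⟨max n₁ n₂, ?_, ?_⟩
      · have hx1 : CosetLT H (a ^ (-(n₁ : ℤ))) x := by
          refine ConradAux.cltT1 hHconv h11 ?_
          intro hc; exact absurd hc.2 (not_lt.2 hl.le)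
        refine ConradAux.lowerMono hHconv h1a ?_ hx1
        have : (n₁ : ℤ) ≤ ((max n₁ n₂ : ℕ) : ℤ) := by
          exact_mod_cast Nat.le_max_left n₁ n₂
        omega
      · have hx2 : CosetLT H x (a ^ ((n₂ : ℤ))) := by
          refine ConradAux.cltT2 hHconv ?_ h22
          intro hc; exact absurd hc.2 (not_lt.2 hr.le)
        refine ConradAux.upperMono hHconv h1a ?_ hx2
        exact_mod_cast Nat.le_max_right n₁ n₂
    have hKG : K ≤ G := by
      intro x hx
      rw [hmemK] at hx
      obtain ⟨n, h1, h2⟩ := hx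
      exact hGconv _ (zpow_mem haG _) _ (zpow_mem haG _) x h1.2 h2.2
    have haK : a ∈ K := by
      rw [hmemK]
      refine ⟨2, ?_, ?_⟩
      · have := ConradAux.powLT (H := H) hHconv h1a (show -((2 : ℕ) : ℤ) < 1 by norm_num)
        simpa using this
      · have := ConradAux.powLT (H := H) hHconv h1a (show (1 : ℤ) < ((2 : ℕ) : ℤ) by norm_num)
        simpa using this
    rcases hjump K hKconv hHK hKG with hKH | hKG'
    · exact absurd (hKH ▸ haK) haH
    · have hgK : g ∈ K := by rw [hKG']; exact hg
      rw [hmemK] at hgK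
      exact hgK
  constructor
  · -- normality
    intro h hh g hg
    by_contra hb
    have key : ∀ a' : Γ, a' ∈ G → a' ∉ H → 1 < a' →
        (∀ k : ℤ, (a' ^ k * g)⁻¹ * g ∈ H) → False := by
      intro a' ha'G ha'H h1' hconj
      obtain ⟨m, hml, hmu⟩ := core a' ha'G ha'H h1' g hg
      have h2 := ConradAux.cltAct (a' ^ (2 * (m : ℤ))) hml
      have e : a' ^ (2 * (m : ℤ)) * a' ^ (-(m : ℤ)) = a' ^ ((m : ℤ)) := by
        rw [← zpow_add]; congr 1; ring
      rw [e] at h2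
      have h3 : CosetLT H (a' ^ ((m : ℤ))) g :=
        ConradAux.clt_congr_right hHconv h2 (hconj (2 * (m : ℤ)))
      exact ConradAux.clt_asymm h3 hmu
    have hbG : g * h * g⁻¹ ∈ G := mul_mem (mul_mem hg (hHG hh)) (inv_mem hg)
    have hb1 : g * h * g⁻¹ ≠ 1 := by
      intro e; exact hb (by rw [e]; exact one_mem H)
    rcases hb1.lt_or_gt with hlt | hgt
    · refine key (g * h⁻¹ * g⁻¹)
        (mul_mem (mul_mem hg (hHG (inv_mem hh))) (inv_mem hg)) ?_ ?_ ?_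
      · intro hm
        refine hb ?_
        have e : g * h * g⁻¹ = (g * h⁻¹ * g⁻¹)⁻¹ := by group
        rw [e]; exact inv_mem hm
      · have h5 := ConradAux.mulLtL (g * h * g⁻¹)⁻¹ hlt
        have e1 : (g * h * g⁻¹)⁻¹ * (g * h * g⁻¹) = 1 := by group
        have e2 : (g * h * g⁻¹)⁻¹ * 1 = g * h⁻¹ * g⁻¹ := by group
        rwa [e1, e2] at h5
      · intro k
        have e : ((g * h⁻¹ * g⁻¹) ^ k * g)⁻¹ * g = h ^ k := by
          rw [conj_zpow]; group
        rw [e]; exact zpow_mem hh _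
    · refine key (g * h * g⁻¹) hbG hb hgt ?_
      intro k
      have e : ((g * h * g⁻¹) ^ k * g)⁻¹ * g = h ^ (-k) := by
        rw [conj_zpow]; group
      rw [e]; exact zpow_mem hh _
  · -- Archimedean
    intro f hfG hfH g hg
    have hf1 : f ≠ 1 := fun e => hfH (by rw [e]; exact one_mem H)
    rcases hf1.lt_or_gt with hlt | hgt
    · have h1 : (1 : Γ) < f⁻¹ := by
        have h5 := ConradAux.mulLtL f⁻¹ hlt
        have e1 : f⁻¹ * f = 1 := by group
        have e2 : f⁻¹ * 1 = f⁻¹ := by group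
        rwa [e1, e2] at h5
      have hfiH : f⁻¹ ∉ H := fun hm => hfH (by simpa using inv_mem hm)
      obtain ⟨n, _, hup⟩ := core f⁻¹ (inv_mem hfG) hfiH h1 g hg
      refine ⟨-(n : ℤ), ?_⟩
      have h2 := hup.2
      rwa [inv_zpow, ← zpow_neg] at h2
    · obtain ⟨n, _, hup⟩ := core f hfG hfH hgt g hg
      exact ⟨(n : ℤ), hup.2⟩
end

section
/- Let (Γ, ⪯) be a left-ordered group and let S = {1} ∪ S⁺ ∪ S⁻ as defined below. Then S is a subgroup of Γ, S is ⪯-convex, the restriction of ⪯ to S is Conradian, and S contains every ⪯-convex subgroup of Γ whose restricted ordering is Conradian; that is, S is the Conradian soul of (Γ, ⪯). -/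
/-- The set `S = {1} ∪ S⁺ ∪ S⁻`, where `S⁺` is the set of `h > 1` with `h ≤ w` for
every crossing `(f, g, u, v, w)` with `1 ≤ u`, and `S⁻` is the set of `h < 1` with
`w ≤ h` for every crossing `(f, g, u, v, w)` with `v ≤ 1`. -/
def ConradSet (Γ : Type*) [Group Γ] [LinearOrder Γ] : Set Γ :=
  {1} ∪
  {h : Γ | 1 < h ∧ ∀ f g u v w : Γ, IsCrossing f g u v w → 1 ≤ u → h ≤ w} ∪
  {h : Γ | h < 1 ∧ ∀ f g u v w : Γ, IsCrossing f g u v w → v ≤ 1 → w ≤ h}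

/-- The restriction of the ordering to a subgroup `C` is Conradian. -/
def IsConradianOn {Γ : Type*} [Group Γ] [LinearOrder Γ] (C : Subgroup Γ) : Prop :=
  ∀ f ∈ C, ∀ g ∈ C, 1 < f → 1 < g → ∃ n : ℕ, 0 < n ∧ g < f * g ^ n

set_option linter.unusedSectionVars false
set_option linter.unusedVariables false

namespace ConradProof

variable {Γ : Type*} [Group Γ] [LinearOrder Γ] [CovariantClass Γ Γ (· * ·) (· ≤ ·)]

lemma lmul (a : Γ) {b c : Γ} (h : b < c) : a * b < a * c :=
  lt_of_le_of_ne (mul_le_mul_right h.le a) (fun e => h.ne (mul_left_cancel e))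

lemma lmul_le_cancel {a b c : Γ} (h : a * b ≤ a * c) : b ≤ c := by
  by_contra hc
  exact absurd (lmul a (not_le.mp hc)) (not_lt.mpr h)

lemma olt_inv {a : Γ} (h : a < 1) : 1 < a⁻¹ := by
  have h2 := lmul a⁻¹ h
  rwa [inv_mul_cancel, mul_one] at h2

lemma inv_olt {a : Γ} (h : 1 < a) : a⁻¹ < 1 := by
  have h2 := lmul a⁻¹ h
  rwa [inv_mul_cancel, mul_one] at h2

lemma cpow (a b : Γ) (n : ℕ) : (a * b * a⁻¹) ^ n = a * b ^ n * a⁻¹ := conj_pow ..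

lemma conj_act (h a x : Γ) (n : ℕ) : (h * a * h⁻¹) ^ n * (h * x) = h * (a ^ n * x) := by
  rw [cpow]; group

lemma pow_mul_assoc (a x : Γ) (n : ℕ) : a ^ n * (a * x) = a ^ (n + 1) * x := by
  rw [← mul_assoc, ← pow_succ]

lemma isCrossing_conj {f g u v w : Γ} (h : Γ) (hc : IsCrossing f g u v w) :
    IsCrossing (h * f * h⁻¹) (h * g * h⁻¹) (h * u) (h * v) (h * w) := by
  obtain ⟨h1, h2, h3, M, N, hM, hN, hfN, hgM⟩ := hc
  refine ⟨lmul h h1, lmul h h2, fun n hn => ?_, M, N, hM, hN, ?_, ?_⟩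
  · rw [conj_act, conj_act]
    exact ⟨lmul h (h3 n hn).1, lmul h (h3 n hn).2⟩
  · rw [conj_act]; exact lmul h hfN
  · rw [conj_act]; exact lmul h hgM

/-- A normalized crossing: witnesses both equal to 1. -/
def NCross (f g u v w : Γ) : Prop :=
  u < w ∧ w < v ∧ (∀ n : ℕ, 0 < n → g ^ n * u < v) ∧ (∀ n : ℕ, 0 < n → u < f ^ n * v) ∧
  f * v < w ∧ w < g * u

namespace NCross

variable {f g u v w : Γ}

lemma uw (h : NCross f g u v w) : u < w := h.1
lemma wv (h : NCross f g u v w) : w < v := h.2.1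
lemma gv (h : NCross f g u v w) : ∀ n : ℕ, 0 < n → g ^ n * u < v := h.2.2.1
lemma uf (h : NCross f g u v w) : ∀ n : ℕ, 0 < n → u < f ^ n * v := h.2.2.2.1
lemma fw (h : NCross f g u v w) : f * v < w := h.2.2.2.2.1
lemma wg (h : NCross f g u v w) : w < g * u := h.2.2.2.2.2

lemma u_lt_gu (h : NCross f g u v w) : u < g * u := h.uw.trans h.wg
lemma fv_lt_v (h : NCross f g u v w) : f * v < v := h.fw.trans h.wv

lemma isCrossing (h : NCross f g u v w) : IsCrossing f g u v w :=
  ⟨h.uw, h.wv, fun n hn => ⟨h.gv n hn, h.uf n hn⟩, 1, 1, one_pos, one_pos,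
    by rw [pow_one]; exact h.fw, by rw [pow_one]; exact h.wg⟩

lemma conj (hn : NCross f g u v w) (h : Γ) :
    NCross (h * f * h⁻¹) (h * g * h⁻¹) (h * u) (h * v) (h * w) := by
  refine ⟨lmul h hn.uw, lmul h hn.wv, fun n hp => ?_, fun n hp => ?_, ?_, ?_⟩
  · rw [conj_act]; exact lmul h (hn.gv n hp)
  · rw [conj_act]; exact lmul h (hn.uf n hp)
  · have e : h * f * h⁻¹ * (h * v) = h * (f * v) := by group
    rw [e]; exact lmul h hn.fw
  · have e : h * g * h⁻¹ * (h * u) = h * (g * u) := by group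
    rw [e]; exact lmul h hn.wg

lemma fstep (hn : NCross f g u v w) (n : ℕ) : f ^ (n + 1) * v < f ^ n * v := by
  have h2 := lmul (f ^ n) hn.fv_lt_v
  rwa [pow_mul_assoc] at h2

lemma gstep (hn : NCross f g u v w) (n : ℕ) : g ^ n * u < g ^ (n + 1) * u := by
  have h2 := lmul (g ^ n) hn.u_lt_gu
  rwa [pow_mul_assoc] at h2

lemma fv_lt_w' (hn : NCross f g u v w) : ∀ n : ℕ, f ^ (n + 1) * v < w := by
  intro n
  induction n with
  | zero => rw [zero_add, pow_one]; exact hn.fw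
  | succ k ih => exact (hn.fstep (k + 1)).trans ih

lemma fv_lt_w (hn : NCross f g u v w) {n : ℕ} (hp : 0 < n) : f ^ n * v < w := by
  obtain ⟨k, rfl⟩ : ∃ k, n = k + 1 := ⟨n - 1, (Nat.succ_pred_eq_of_pos hp).symm⟩
  exact hn.fv_lt_w' k

lemma gBound (hn : NCross f g u v w) {x : Γ} (hx : x ≤ w) {n : ℕ} (hp : 0 < n) :
    g ^ n * x < v := by
  have h1 : g ^ n * x ≤ g ^ n * w := mul_le_mul_right hx _
  have h2 : g ^ n * w < g ^ n * (g * u) := lmul _ hn.wg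
  rw [pow_mul_assoc] at h2
  exact h1.trans_lt (h2.trans (hn.gv (n + 1) n.succ_pos))

lemma fBound (hn : NCross f g u v w) {x : Γ} (hx : w ≤ x) {n : ℕ} (hp : 0 < n) :
    u < f ^ n * x := by
  have h1 : u < f ^ (n + 1) * v := hn.uf (n + 1) n.succ_pos
  rw [← pow_mul_assoc] at h1
  exact h1.trans_le (mul_le_mul_right (hn.fw.le.trans hx) _)

lemma fam (hn : NCross f g u v w) {m : ℕ} (hm : 0 < m) : IsCrossing f g u v (f ^ m * v) := by
  refine ⟨hn.uf m hm, (hn.fv_lt_w hm).trans hn.wv,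
    fun n hp => ⟨hn.gv n hp, hn.uf n hp⟩, 1, m + 1, one_pos, m.succ_pos, ?_, ?_⟩
  · exact hn.fstep m
  · rw [pow_one]; exact (hn.fv_lt_w hm).trans hn.wg

end NCross

lemma exists_ncross {f g u v w : Γ} (hc : IsCrossing f g u v w) :
    ∃ N M : ℕ, NCross (f ^ N) (g ^ M) u v w := by
  obtain ⟨h1, h2, h3, M, N, hM, hN, hfN, hgM⟩ := hc
  refine ⟨N, M, h1, h2, fun n hn => ?_, fun n hn => ?_, hfN, hgM⟩
  · rw [← pow_mul]; exact (h3 (M * n) (Nat.mul_pos hM hn)).1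
  · rw [← pow_mul]; exact (h3 (N * n) (Nat.mul_pos hN hn)).2

/-- Membership in `S⁺`. -/
def Sp (x : Γ) : Prop :=
  1 < x ∧ ∀ f g u v w : Γ, IsCrossing f g u v w → 1 ≤ u → x ≤ w

/-- Membership in `S⁻`. -/
def Sm (x : Γ) : Prop :=
  x < 1 ∧ ∀ f g u v w : Γ, IsCrossing f g u v w → v ≤ 1 → w ≤ x

lemma mem_conradSet {x : Γ} : x ∈ ConradSet Γ ↔ x = 1 ∨ Sp x ∨ Sm x := by
  simp [ConradSet, Sp, Sm, Set.mem_union, Set.mem_singleton_iff, Set.mem_setOf_eq, or_assoc]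

lemma sp_of_le {x y : Γ} (hy : Sp y) (h1 : 1 < x) (hxy : x ≤ y) : Sp x :=
  ⟨h1, fun f g u v w hcr hu => hxy.trans (hy.2 f g u v w hcr hu)⟩

end ConradProof


namespace ConradProof

variable {Γ : Type*} [Group Γ] [LinearOrder Γ] [CovariantClass Γ Γ (· * ·) (· ≤ ·)]

lemma sp_mul {s t : Γ} (hs : Sp s) (ht : Sp t) : Sp (s * t) := by
  have hst : 1 < s * t := by
    have h1 : s * 1 < s * t := lmul s ht.1
    rw [mul_one] at h1
    exact hs.1.trans h1
  refine ⟨hst, fun f g u v w hcr hu => ?_⟩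
  obtain ⟨N, M, hn⟩ := exists_ncross hcr
  set F := f ^ N with hF
  set G := g ^ M with hG
  rcases le_or_gt s u with hsu | hus
  · have hu' : (1 : Γ) ≤ s⁻¹ * u := by
      have h2 := mul_le_mul_right hsu s⁻¹
      rwa [inv_mul_cancel] at h2
    have h2 := ht.2 _ _ _ _ _ (isCrossing_conj s⁻¹ hn.isCrossing) hu'
    have h3 : s * t ≤ s * (s⁻¹ * w) := mul_le_mul_right h2 s
    rwa [mul_inv_cancel_left] at h3
  · have hsw : s ≤ w := hs.2 _ _ _ _ _ hcr hu
    have hsf : ∀ m : ℕ, 0 < m → s ≤ F ^ m * v := fun m hm =>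
      hs.2 _ _ _ _ _ (hn.fam hm) hu
    have hsf' : ∀ m : ℕ, 0 < m → s < F ^ m * v := by
      intro m hm
      rcases eq_or_lt_of_le (hsf m hm) with he | h
      · exfalso
        have h4 := hn.fstep m
        rw [← he] at h4
        exact absurd (hsf (m + 1) m.succ_pos) (not_le.mpr h4)
      · exact h
    have hX : IsCrossing F G s v (F * v) := by
      refine ⟨?_, hn.fv_lt_v, fun n hp => ⟨hn.gBound hsw hp, hsf' n hp⟩,
        1, 1 + 1, one_pos, Nat.succ_pos 1, ?_, ?_⟩
      · have h5 := hsf' 1 one_pos; rwa [pow_one] at h5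
      · have h5 := hn.fstep 1; rwa [pow_one] at h5
      · rw [pow_one]
        exact hn.fw.trans (hn.wg.trans (lmul G hus))
    have hu1 : (1 : Γ) ≤ s⁻¹ * s := by rw [inv_mul_cancel]
    have h6 := ht.2 _ _ _ _ _ (isCrossing_conj s⁻¹ hX) hu1
    have h7 : s * t ≤ s * (s⁻¹ * (F * v)) := mul_le_mul_right h6 s
    rw [mul_inv_cancel_left] at h7
    exact h7.trans hn.fw.le

lemma sp_inv {s : Γ} (hs : Sp s) : Sm s⁻¹ := by
  refine ⟨inv_olt hs.1, fun f g u v w hcr hv => ?_⟩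
  by_contra hcon
  replace hcon : s⁻¹ < w := not_le.mp hcon
  obtain ⟨N, M, hn⟩ := exists_ncross hcr
  set F := f ^ N with hF
  set G := g ^ M with hG
  rcases le_or_gt s⁻¹ u with hsu | hus
  · have hu' : (1 : Γ) ≤ s * u := by
      have h2 := mul_le_mul_right hsu s
      rwa [mul_inv_cancel] at h2
    have h1 := hs.2 _ _ _ _ _ (isCrossing_conj s hn.isCrossing) hu'
    have h2 : s * 1 ≤ s * w := by rwa [mul_one]
    have h3 : (1 : Γ) ≤ w := lmul_le_cancel h2
    exact absurd (hn.wv.trans_le hv) (not_lt.mpr h3)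
  · have hn' := hn.conj s
    set F' := s * F * s⁻¹ with hF'
    set G' := s * G * s⁻¹ with hG'
    have hu1 : s * u < 1 := by
      have h2 := lmul s hus; rwa [mul_inv_cancel] at h2
    have hw1 : (1 : Γ) < s * w := by
      have h2 := lmul s hcon; rwa [mul_inv_cancel] at h2
    have hv1 : s * v ≤ s := by
      have h2 := mul_le_mul_right hv s; rwa [mul_one] at h2
    by_cases hb : ∀ n : ℕ, 0 < n → (1 : Γ) ≤ F' ^ n * (s * v)
    · -- case (b1)
      have hb' : ∀ n : ℕ, 0 < n → (1 : Γ) < F' ^ n * (s * v) := by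
        intro n hp
        rcases eq_or_lt_of_le (hb n hp) with he | h
        · exfalso
          have h4 := hn'.fstep n
          rw [← he] at h4
          exact absurd (hb (n + 1) n.succ_pos) (not_le.mpr h4)
        · exact h
      have hX : IsCrossing F' G' 1 (s * v) (F' * (s * v)) := by
        refine ⟨?_, hn'.fv_lt_v, fun n hp => ⟨hn'.gBound hw1.le hp, hb' n hp⟩,
          1, 1 + 1, one_pos, Nat.succ_pos 1, ?_, ?_⟩
        · have h5 := hb' 1 one_pos; rwa [pow_one] at h5
        · have h5 := hn'.fstep 1; rwa [pow_one] at h5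
        · rw [pow_one]
          have h5 : G' * (s * u) < G' * 1 := lmul G' hu1
          exact hn'.fw.trans (hn'.wg.trans h5)
      have h6 := hs.2 _ _ _ _ _ hX le_rfl
      have h7 : F' * (s * v) < s * v := hn'.fv_lt_v
      exact absurd (h6.trans_lt (h7.trans_le hv1)) (lt_irrefl s)
    · -- case (b2)
      push_neg at hb
      obtain ⟨m, hm, hmlt⟩ := hb
      set Z := G' * F' ^ m with hZ
      have hGu1 : (1 : Γ) < G' * (s * u) := hw1.trans hn'.wg
      have hG1v : G' * 1 < s * v := by
        have h5 := hn'.gBound (x := 1) hw1.le one_pos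
        rwa [pow_one] at h5
      have key : ∀ x : Γ, s * w ≤ x → x ≤ s * v → G' * (s * u) < Z * x ∧ Z * x < G' * 1 := by
        intro x h1x h2x
        have hl : s * u < F' ^ m * x := hn'.fBound h1x hm
        have hu' : F' ^ m * x < 1 := by
          have h8 : F' ^ m * x ≤ F' ^ m * (s * v) := mul_le_mul_right h2x _
          exact h8.trans_lt hmlt
        have e : Z * x = G' * (F' ^ m * x) := by rw [hZ, mul_assoc]
        exact ⟨by rw [e]; exact lmul G' hl, by rw [e]; exact lmul G' hu'⟩
      have hZiter : ∀ n : ℕ, G' * (s * u) < Z ^ (n + 1) * (s * v) ∧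
          Z ^ (n + 1) * (s * v) < G' * 1 := by
        intro n
        induction n with
        | zero =>
          rw [zero_add, pow_one]
          exact key (s * v) hn'.wv.le le_rfl
        | succ k ih =>
          have e : Z ^ (k + 1 + 1) * (s * v) = Z * (Z ^ (k + 1) * (s * v)) := by
            rw [pow_succ', mul_assoc]
          rw [e]
          exact key _ (hn'.wg.trans ih.1).le (ih.2.trans hG1v).le
      have hX : IsCrossing Z G' (G' * (s * u)) (s * v) (G' * 1) := by
        refine ⟨lmul G' hu1, hG1v, fun n hp => ⟨?_, ?_⟩, 1, 0 + 1, one_pos, Nat.succ_pos 0,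
          ?_, ?_⟩
        · rw [pow_mul_assoc]
          exact hn'.gv (n + 1) n.succ_pos
        · obtain ⟨k, rfl⟩ : ∃ k, n = k + 1 := ⟨n - 1, (Nat.succ_pred_eq_of_pos hp).symm⟩
          exact (hZiter k).1
        · exact (hZiter 0).2
        · rw [pow_one]
          exact lmul G' hGu1
      have h12 := hs.2 _ _ _ _ _ hX hGu1.le
      exact absurd (h12.trans_lt (hG1v.trans_le hv1)) (lt_irrefl s)

lemma sm_inv {s : Γ} (hs : Sm s) : Sp s⁻¹ := by
  refine ⟨olt_inv hs.1, fun f g u v w hcr hu => ?_⟩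
  by_contra hcon
  replace hcon : w < s⁻¹ := not_le.mp hcon
  obtain ⟨N, M, hn⟩ := exists_ncross hcr
  set F := f ^ N with hF
  set G := g ^ M with hG
  rcases le_or_gt v s⁻¹ with hvs | hsv
  · have hv' : s * v ≤ 1 := by
      have h2 := mul_le_mul_right hvs s
      rwa [mul_inv_cancel] at h2
    have h1 := hs.2 _ _ _ _ _ (isCrossing_conj s hn.isCrossing) hv'
    have h2 : s * w ≤ s * 1 := by rwa [mul_one]
    have h3 : w ≤ 1 := lmul_le_cancel h2
    exact absurd (hu.trans_lt hn.uw) (not_lt.mpr h3)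
  · have hn' := hn.conj s
    set F' := s * F * s⁻¹ with hF'
    set G' := s * G * s⁻¹ with hG'
    have hw1 : s * w < 1 := by
      have h2 := lmul s hcon; rwa [mul_inv_cancel] at h2
    have hv1 : (1 : Γ) < s * v := by
      have h2 := lmul s hsv; rwa [mul_inv_cancel] at h2
    have hus : s ≤ s * u := by
      have h2 := mul_le_mul_right hu s; rwa [mul_one] at h2
    by_cases hb : ∀ n : ℕ, 0 < n → G' ^ n * (s * u) ≤ 1
    · -- case (b1')
      have hb' : ∀ n : ℕ, 0 < n → G' ^ n * (s * u) < 1 := by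
        intro n hp
        rcases eq_or_lt_of_le (hb n hp) with he | h
        · exfalso
          have h4 := hn'.gstep n
          rw [he] at h4
          exact absurd (hb (n + 1) n.succ_pos) (not_le.mpr h4)
        · exact h
      have hX : IsCrossing F' G' (s * u) 1 (G' * (s * u)) := by
        refine ⟨hn'.u_lt_gu, ?_, fun n hp => ⟨hb' n hp, hn'.fBound hw1.le hp⟩,
          1 + 1, 0 + 1, Nat.succ_pos 1, Nat.succ_pos 0, ?_, ?_⟩
        · have h5 := hb' 1 one_pos; rwa [pow_one] at h5
        · rw [pow_one, mul_one]
          have h5 : F' * 1 < F' * (s * v) := lmul F' hv1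
          rw [mul_one] at h5
          exact h5.trans (hn'.fw.trans hn'.wg)
        · have h5 := hn'.gstep 1
          rwa [pow_one] at h5
      have h6 := hs.2 _ _ _ _ _ hX le_rfl
      exact absurd h6 (not_le.mpr (hus.trans_lt hn'.u_lt_gu))
    · -- case (b2')
      push_neg at hb
      obtain ⟨m, hm, hmgt⟩ := hb
      set Z := F' * G' ^ m with hZ
      have hF1 : s * u < F' * 1 := by
        have h5 := hn'.fBound (x := 1) hw1.le one_pos
        rwa [pow_one] at h5
      have hF1w : F' * 1 < s * w := by
        have h5 : F' * 1 < F' * (s * v) := lmul F' hv1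
        exact h5.trans hn'.fw
      have key : ∀ x : Γ, s * u ≤ x → x ≤ s * w → F' * 1 < Z * x ∧ Z * x < s * w := by
        intro x h1x h2x
        have hgt : (1 : Γ) < G' ^ m * x := hmgt.trans_le (mul_le_mul_right h1x _)
        have hlt : G' ^ m * x < s * v := hn'.gBound h2x hm
        have e : Z * x = F' * (G' ^ m * x) := by rw [hZ, mul_assoc]
        exact ⟨by rw [e]; exact lmul F' hgt,
          by rw [e]; exact (lmul F' hlt).trans hn'.fw⟩
      have hZiter : ∀ n : ℕ, Z ^ (n + 1) * (s * u) < s * w ∧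
          F' * 1 < Z ^ (n + 1) * (s * u) := by
        intro n
        induction n with
        | zero =>
          rw [zero_add, pow_one]
          have h5 := key (s * u) le_rfl hn'.uw.le
          exact ⟨h5.2, h5.1⟩
        | succ k ih =>
          have e : Z ^ (k + 1 + 1) * (s * u) = Z * (Z ^ (k + 1) * (s * u)) := by
            rw [pow_succ', mul_assoc]
          rw [e]
          have h5 := key _ (hF1.trans ih.2).le ih.1.le
          exact ⟨h5.2, h5.1⟩
      have hX : IsCrossing F' Z (s * u) (s * w) (F' * 1) := by
        refine ⟨hF1, hF1w, fun n hp => ⟨?_, hn'.fBound le_rfl hp⟩,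
          0 + 1, 0 + 1, Nat.succ_pos 0, Nat.succ_pos 0, ?_, ?_⟩
        · obtain ⟨k, rfl⟩ : ∃ k, n = k + 1 := ⟨n - 1, (Nat.succ_pred_eq_of_pos hp).symm⟩
          exact (hZiter k).1
        · rw [pow_one]
          exact lmul F' hw1
        · exact (hZiter 0).2
      have h12 := hs.2 _ _ _ _ _ hX hw1.le
      exact absurd h12 (not_le.mpr (hus.trans_lt hF1))

end ConradProof
namespace ConradProof

variable {Γ : Type*} [Group Γ] [LinearOrder Γ] [CovariantClass Γ Γ (· * ·) (· ≤ ·)]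

/-- From a normalized crossing one extracts a pair violating the Conradian property. -/
lemma ncross_pair {φ a U V W : Γ} (hn : NCross φ a U V W) :
    1 < U⁻¹ * (φ * (a * U)) ∧ 1 < U⁻¹ * (a * U) ∧
      ∀ n : ℕ, 0 < n → (U⁻¹ * (φ * (a * U))) * (U⁻¹ * (a * U)) ^ n < U⁻¹ * (a * U) := by
  have hP : U < φ * (a * U) := by
    have h1 : φ * (φ * V) < φ * (a * U) := lmul φ (hn.fw.trans hn.wg)
    have h2 : U < φ ^ (1 + 1) * V := hn.uf (1 + 1) (Nat.succ_pos 1)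
    rw [← pow_mul_assoc, pow_one] at h2
    exact (h2.trans h1)
  have hQ : U < a * U := hn.uw.trans hn.wg
  have hione : ∀ x : Γ, U < x → 1 < U⁻¹ * x := by
    intro x hx
    have h3 := lmul U⁻¹ hx
    rwa [inv_mul_cancel] at h3
  refine ⟨hione _ hP, hione _ hQ, fun n hp => ?_⟩
  have hQn : (U⁻¹ * (a * U)) ^ n = U⁻¹ * a ^ n * U := by
    have e : U⁻¹ * (a * U) = U⁻¹ * a * U⁻¹⁻¹ := by rw [inv_inv, mul_assoc]
    rw [e, cpow, inv_inv]
  have e2 : (U⁻¹ * (φ * (a * U))) * (U⁻¹ * (a * U)) ^ n = U⁻¹ * (φ * (a ^ (n + 1) * U)) := by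
    rw [hQn]; group
  rw [e2]
  refine lmul U⁻¹ ?_
  exact ((lmul φ (hn.gv (n + 1) n.succ_pos)).trans hn.fw).trans hn.wg

lemma sp_of_convex_conradian {K : Subgroup Γ} (hKc : IsConvexSubgroup K)
    (hKr : IsConradianOn K) {h : Γ} (hhK : h ∈ K) (hh1 : 1 < h) : Sp h := by
  refine ⟨hh1, fun f g u v w hcr hu => ?_⟩
  by_contra hcon
  replace hcon : w < h := not_le.mp hcon
  obtain ⟨N, M, hn⟩ := exists_ncross hcr
  set F := f ^ N with hFd
  set G := g ^ M with hGd
  have h1w : (1 : Γ) < w := hu.trans_lt hn.uw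
  have hmemw : w ∈ K := hKc 1 K.one_mem h hhK w h1w hcon
  have hmemu : u ∈ K := by
    rcases eq_or_lt_of_le hu with he | h1u
    · rw [← he]; exact K.one_mem
    · exact hKc 1 K.one_mem h hhK u h1u (hn.uw.trans hcon)
  set c := u⁻¹ * w with hc
  set F₁ := u⁻¹ * (F * (G * u)) with hF₁
  set F₂ := u⁻¹ * (F * (G * (G * u))) with hF₂
  -- basic bounds
  have hGu_v : G * u < v := by
    have h2 := hn.gv 1 one_pos; rwa [pow_one] at h2
  have hGGu_v : G * (G * u) < v := by
    have h2 := hn.gv (1 + 1) (Nat.succ_pos 1)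
    rwa [← pow_mul_assoc, pow_one] at h2
  have hu_Fw : u < F * w := by
    have h2 := hn.fBound (le_refl w) one_pos; rwa [pow_one] at h2
  have hu_FGu : u < F * (G * u) := hu_Fw.trans (lmul F hn.wg)
  have hFGu_Fv : F * (G * u) < F * v := lmul F hGu_v
  have hGu_GGu : G * u < G * (G * u) := lmul G hn.u_lt_gu
  have hu_FGGu : u < F * (G * (G * u)) := hu_Fw.trans (lmul F (hn.wg.trans hGu_GGu))
  have hFGGu_Fv : F * (G * (G * u)) < F * v := lmul F hGGu_v
  have hione : ∀ x : Γ, u < x → 1 < u⁻¹ * x := by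
    intro x hx
    have h3 := lmul u⁻¹ hx
    rwa [inv_mul_cancel] at h3
  -- memberships
  have h1c : (1 : Γ) < c := hione w hn.uw
  have hmemc : c ∈ K := K.mul_mem (K.inv_mem hmemu) hmemw
  have h1F₁ : (1 : Γ) < F₁ := hione _ hu_FGu
  have hF₁c : F₁ < c := lmul u⁻¹ (hFGu_Fv.trans hn.fw)
  have hmemF₁ : F₁ ∈ K := hKc 1 K.one_mem c hmemc F₁ h1F₁ hF₁c
  have h1F₂ : (1 : Γ) < F₂ := hione _ hu_FGGu
  have hF₂c : F₂ < c := lmul u⁻¹ (hFGGu_Fv.trans hn.fw)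
  have hmemF₂ : F₂ ∈ K := hKc 1 K.one_mem c hmemc F₂ h1F₂ hF₂c
  set A := F₂ * F₁⁻¹ with hA
  have hmemA : A ∈ K := K.mul_mem hmemF₂ (K.inv_mem hmemF₁)
  -- computational identities
  have eA : A = u⁻¹ * F * G * (u⁻¹ * F)⁻¹ := by
    rw [hA, hF₂, hF₁]; group
  have hAn : ∀ n : ℕ, A ^ n * F₁ = u⁻¹ * (F * (G ^ (n + 1) * u)) := by
    intro n
    have e1 : A ^ n = u⁻¹ * F * G ^ n * (u⁻¹ * F)⁻¹ := by
      have e0 : A = u⁻¹ * F * G * (u⁻¹ * F)⁻¹ := eA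
      rw [e0]
      exact cpow (u⁻¹ * F) G n
    rw [e1, hF₁, ← pow_mul_assoc G u n]
    simp [mul_assoc, mul_inv_cancel_left, inv_mul_cancel_left, mul_inv_rev, inv_inv]
  have hF₁n : ∀ n : ℕ, F₁ ^ n = u⁻¹ * (F * G) ^ n * u := by
    intro n
    have e2 : F₁ = u⁻¹ * (F * G) * u⁻¹⁻¹ := by rw [hF₁]; group
    rw [e2, cpow, inv_inv]
  -- the (F*G)-orbit of w stays in (u, w]
  have hTiter : ∀ n : ℕ, u < (F * G) ^ n * w ∧ (F * G) ^ n * w ≤ w := by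
    intro n
    induction n with
    | zero => rw [pow_zero, one_mul]; exact ⟨hn.uw, le_rfl⟩
    | succ k ih =>
      have e3 : (F * G) ^ (k + 1) * w = F * (G * ((F * G) ^ k * w)) := by
        rw [pow_succ', mul_assoc, mul_assoc]
      have hgx_lo : w < G * ((F * G) ^ k * w) := hn.wg.trans (lmul G ih.1)
      have hgx_hi : G * ((F * G) ^ k * w) < v := by
        have h5 := hn.gBound (x := (F * G) ^ k * w) ih.2 one_pos
        rwa [pow_one] at h5
      constructor
      · rw [e3]; exact hu_Fw.trans (lmul F hgx_lo)
      · rw [e3]; exact ((lmul F hgx_hi).trans hn.fw).le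
  -- the internal crossing, entirely inside K
  have hX : IsCrossing F₁ A F₁ c F₂ := by
    refine ⟨?_, ?_, fun n hp => ⟨?_, ?_⟩, 1 + 1, 0 + 1, Nat.succ_pos 1, Nat.succ_pos 0, ?_, ?_⟩
    · -- F₁ < F₂
      rw [hF₁, hF₂]
      exact lmul u⁻¹ (lmul F (lmul G hn.u_lt_gu))
    · -- F₂ < c
      exact hF₂c
    · -- A^n * F₁ < c
      rw [hAn n, hc]
      exact lmul u⁻¹ ((lmul F (hn.gv (n + 1) n.succ_pos)).trans hn.fw)
    · -- F₁ < F₁^n * c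
      rw [hF₁n n, hc]
      have e4 : u⁻¹ * (F * G) ^ n * u * (u⁻¹ * w) = u⁻¹ * ((F * G) ^ n * w) := by
        simp [mul_assoc, mul_inv_cancel_left]
      rw [e4, hF₁]
      refine lmul u⁻¹ ?_
      obtain ⟨k, rfl⟩ : ∃ k, n = k + 1 := ⟨n - 1, (Nat.succ_pred_eq_of_pos hp).symm⟩
      have e5 : (F * G) ^ (k + 1) * w = F * (G * ((F * G) ^ k * w)) := by
        rw [pow_succ', mul_assoc, mul_assoc]
      rw [e5]
      exact lmul F (lmul G (hTiter k).1)
    · -- F₁^(0+1) * c < F₂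
      rw [pow_one, hF₁, hc]
      have e6 : u⁻¹ * (F * (G * u)) * (u⁻¹ * w) = u⁻¹ * (F * (G * w)) := by
        simp [mul_assoc, mul_inv_cancel_left]
      rw [e6, hF₂]
      exact lmul u⁻¹ (lmul F (lmul G hn.wg))
    · -- F₂ < A^(1+1) * F₁
      rw [hAn (1 + 1), hF₂]
      refine lmul u⁻¹ (lmul F ?_)
      have h7 := hn.gstep (1 + 1)
      have e7 : G ^ (1 + 1) * u = G * (G * u) := by
        rw [← pow_mul_assoc, pow_one]
      rw [e7] at h7
      exact h7
  -- normalize it and contradict the Conradian property of K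
  obtain ⟨N₀, M₀, hXn⟩ := exists_ncross hX
  have hmemPhi : F₁ ^ N₀ ∈ K := pow_mem hmemF₁ N₀
  have hmemA2 : A ^ M₀ ∈ K := pow_mem hmemA M₀
  obtain ⟨hP1, hQ1, hPQ⟩ := ncross_pair hXn
  have hmemP : F₁⁻¹ * (F₁ ^ N₀ * (A ^ M₀ * F₁)) ∈ K :=
    K.mul_mem (K.inv_mem hmemF₁) (K.mul_mem hmemPhi (K.mul_mem hmemA2 hmemF₁))
  have hmemQ : F₁⁻¹ * (A ^ M₀ * F₁) ∈ K :=
    K.mul_mem (K.inv_mem hmemF₁) (K.mul_mem hmemA2 hmemF₁)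
  obtain ⟨n, hnp, hlt⟩ := hKr _ hmemP _ hmemQ hP1 hQ1
  exact absurd hlt (not_lt.mpr (hPQ n hnp).le)

end ConradProof

namespace ConradProof

variable {Γ : Type*} [Group Γ] [LinearOrder Γ] [CovariantClass Γ Γ (· * ·) (· ≤ ·)]

lemma conrad_mul {a b : Γ} (ha : a ∈ ConradSet Γ) (hb : b ∈ ConradSet Γ) :
    a * b ∈ ConradSet Γ := by
  rw [mem_conradSet] at ha hb ⊢
  rcases ha with rfl | ha | ha
  · rwa [one_mul]
  · rcases hb with rfl | hb | hb
    · rw [mul_one]; exact Or.inr (Or.inl ha)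
    · exact Or.inr (Or.inl (sp_mul ha hb))
    · -- Sp a, Sm b
      rcases lt_trichotomy (a * b) 1 with h | h | h
      · have hb' : Sp b⁻¹ := sm_inv hb
        have h2 : (a * b)⁻¹ < b⁻¹ := by
          rw [mul_inv_rev]
          have h3 : b⁻¹ * a⁻¹ < b⁻¹ * 1 := lmul b⁻¹ (inv_olt ha.1)
          rwa [mul_one] at h3
        have h4 : Sp ((a * b)⁻¹) := sp_of_le hb' (olt_inv h) h2.le
        have h5 := sp_inv h4
        rw [inv_inv] at h5
        exact Or.inr (Or.inr h5)
      · exact Or.inl h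
      · have h2 : a * b < a := by
          have h3 := lmul a hb.1; rwa [mul_one] at h3
        exact Or.inr (Or.inl (sp_of_le ha h h2.le))
  · rcases hb with rfl | hb | hb
    · rw [mul_one]; exact Or.inr (Or.inr ha)
    · -- Sm a, Sp b
      rcases lt_trichotomy (a * b) 1 with h | h | h
      · have hSp : Sp ((a * b)⁻¹) := by
          refine ⟨olt_inv h, fun f g u v w hcr hu => ?_⟩
          have hu' : (1 : Γ) ≤ b * u := by
            have h8 : b * 1 ≤ b * u := mul_le_mul_right hu b
            rw [mul_one] at h8
            exact hb.1.le.trans h8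
          have h6 := (sm_inv ha).2 _ _ _ _ _ (isCrossing_conj b hcr) hu'
          have h7 : b⁻¹ * a⁻¹ ≤ b⁻¹ * (b * w) := mul_le_mul_right h6 _
          rw [inv_mul_cancel_left] at h7
          rwa [mul_inv_rev]
        have h9 := sp_inv hSp
        rw [inv_inv] at h9
        exact Or.inr (Or.inr h9)
      · exact Or.inl h
      · refine Or.inr (Or.inl ⟨h, fun f g u v w hcr hu => ?_⟩)
        have hu' : (1 : Γ) ≤ a⁻¹ * u := by
          have h8 : a⁻¹ * 1 ≤ a⁻¹ * u := mul_le_mul_right hu _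
          rw [mul_one] at h8
          exact (olt_inv ha.1).le.trans h8
        have h6 := hb.2 _ _ _ _ _ (isCrossing_conj a⁻¹ hcr) hu'
        have h7 : a * b ≤ a * (a⁻¹ * w) := mul_le_mul_right h6 a
        rwa [mul_inv_cancel_left] at h7
    · -- Sm, Sm
      have h1 : Sp (b⁻¹ * a⁻¹) := sp_mul (sm_inv hb) (sm_inv ha)
      have h2 := sp_inv h1
      have e : (b⁻¹ * a⁻¹)⁻¹ = a * b := by group
      rw [e] at h2
      exact Or.inr (Or.inr h2)

lemma conrad_inv {a : Γ} (ha : a ∈ ConradSet Γ) : a⁻¹ ∈ ConradSet Γ := by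
  rw [mem_conradSet] at ha ⊢
  rcases ha with rfl | ha | ha
  · rw [inv_one]; exact Or.inl rfl
  · exact Or.inr (Or.inr (sp_inv ha))
  · exact Or.inr (Or.inl (sm_inv ha))

variable (Γ) in
/-- The Conradian soul as a subgroup. -/
def CS : Subgroup Γ where
  carrier := ConradSet Γ
  one_mem' := Or.inl (Or.inl rfl)
  mul_mem' := fun ha hb => conrad_mul ha hb
  inv_mem' := fun ha => conrad_inv ha

lemma mem_CS {x : Γ} : x ∈ CS Γ ↔ x ∈ ConradSet Γ := Iff.rfl

lemma cs_convex : IsConvexSubgroup (CS Γ) := by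
  intro c₁ hc₁ c₂ hc₂ x h1 h2
  rcases lt_trichotomy x 1 with hx | rfl | hx
  · rcases mem_conradSet.mp (mem_CS.mp hc₁) with rfl | h | h
    · exact absurd (h1.trans hx) (lt_irrefl 1)
    · exact absurd ((h.1.trans h1).trans hx) (lt_irrefl 1)
    · exact mem_CS.mpr (mem_conradSet.mpr (Or.inr (Or.inr
        ⟨hx, fun f g u v w hcr hv => (h.2 f g u v w hcr hv).trans h1.le⟩)))
  · exact (CS Γ).one_mem
  · rcases mem_conradSet.mp (mem_CS.mp hc₂) with rfl | h | h
    · exact absurd (hx.trans h2) (lt_irrefl 1)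
    · exact mem_CS.mpr (mem_conradSet.mpr (Or.inr (Or.inl
        ⟨hx, fun f g u v w hcr hu => h2.le.trans (h.2 f g u v w hcr hu)⟩)))
    · exact absurd (hx.trans (h2.trans h.1)) (lt_irrefl 1)

lemma cs_conradian : IsConradianOn (CS Γ) := by
  intro f hf g hg hf1 hg1
  by_contra hcon
  push_neg at hcon
  have hle : ∀ n : ℕ, 0 < n → f * g ^ n ≤ g := hcon
  have hstrict : ∀ n : ℕ, 0 < n → f * g ^ n < g := by
    intro n hp
    rcases eq_or_lt_of_le (hle n hp) with he | h
    · exfalso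
      have h2 : f * g ^ (n + 1) = g * g := by rw [pow_succ, ← mul_assoc, he]
      have h3 := hle (n + 1) n.succ_pos
      rw [h2] at h3
      have h4 : g * 1 < g * g := lmul g hg1
      rw [mul_one] at h4
      exact absurd h3 (not_le.mpr h4)
    · exact h
  have hX : IsCrossing f g 1 (f⁻¹ * g) g := by
    have hkey : ∀ n : ℕ, 0 < n → g ^ n < f⁻¹ * g := by
      intro n hp
      have h2 := lmul f⁻¹ (hstrict n hp)
      rwa [inv_mul_cancel_left] at h2
    refine ⟨hg1, ?_, fun n hp => ⟨?_, ?_⟩, 1 + 1, 1 + 1, Nat.succ_pos 1, Nat.succ_pos 1,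
      ?_, ?_⟩
    · have h2 := hkey 1 one_pos; rwa [pow_one] at h2
    · rw [mul_one]; exact hkey n hp
    · -- 1 < f^n * (f⁻¹ * g)
      obtain ⟨k, rfl⟩ : ∃ k, n = k + 1 := ⟨n - 1, (Nat.succ_pred_eq_of_pos hp).symm⟩
      have e : f ^ (k + 1) * (f⁻¹ * g) = f ^ k * g := by
        rw [pow_succ]; group
      rw [e]
      rcases Nat.eq_zero_or_pos k with rfl | hk
      · rw [pow_zero, one_mul]; exact hg1
      · have h5 : (1 : Γ) < f ^ k := one_lt_pow' hf1 hk.ne'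
        have h6 : f ^ k * 1 < f ^ k * g := lmul _ hg1
        rw [mul_one] at h6
        exact h5.trans h6
    · -- f^(1+1) * (f⁻¹ * g) < g
      have e : f ^ (1 + 1) * (f⁻¹ * g) = f * g := by group
      rw [e]
      have h2 := hstrict 1 one_pos; rwa [pow_one] at h2
    · -- g < g^(1+1) * 1
      rw [mul_one]
      have e : g ^ (1 + 1) = g * g := by rw [pow_succ, pow_one]
      rw [e]
      have h4 := lmul g hg1; rwa [mul_one] at h4
  have hgg : g * g ∈ ConradSet Γ := conrad_mul (mem_CS.mp hg) (mem_CS.mp hg)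
  have h1gg : (1 : Γ) < g * g := by
    have h4 := lmul g hg1; rw [mul_one] at h4; exact hg1.trans h4
  rcases mem_conradSet.mp hgg with he | hsp | hsm
  · exact absurd he (ne_of_gt h1gg)
  · have h7 := hsp.2 _ _ _ _ _ hX le_rfl
    have h4 := lmul g hg1
    rw [mul_one] at h4
    exact absurd h7 (not_le.mpr h4)
  · exact absurd hsm.1 (not_lt.mpr h1gg.le)

end ConradProof

/-- The set `S` is a subgroup, it is convex, its restricted ordering is Conradian,
and it contains every convex subgroup with Conradian restricted ordering; that is,
`S` is the Conradian soul. -/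
theorem conradSet_is_conradian_soul (Γ : Type*) [Group Γ] [LinearOrder Γ]
    [CovariantClass Γ Γ (· * ·) (· ≤ ·)] :
    ∃ C : Subgroup Γ, (C : Set Γ) = ConradSet Γ ∧
      IsConvexSubgroup C ∧ IsConradianOn C ∧
      ∀ K : Subgroup Γ, IsConvexSubgroup K → IsConradianOn K → K ≤ C := by
  refine ⟨ConradProof.CS Γ, rfl, ConradProof.cs_convex, ConradProof.cs_conradian, ?_⟩
  intro K hKc hKr x hx
  rcases lt_trichotomy x 1 with h | rfl | h
  · have h1 : ConradProof.Sp x⁻¹ :=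
      ConradProof.sp_of_convex_conradian hKc hKr (K.inv_mem hx) (ConradProof.olt_inv h)
    have h2 := ConradProof.sp_inv h1
    rw [inv_inv] at h2
    exact ConradProof.mem_CS.mpr (ConradProof.mem_conradSet.mpr (Or.inr (Or.inr h2)))
  · exact (ConradProof.CS Γ).one_mem
  · exact ConradProof.mem_CS.mpr (ConradProof.mem_conradSet.mpr (Or.inr (Or.inl
      (ConradProof.sp_of_convex_conradian hKc hKr hx h))))
end

section
/- Let (Γ, ⪯) be a left-ordered group. If (f, g, u, v, w) is a crossing for (Γ, ⪯), then (f, g, u, v, g^n w) and (f, g, u, v, f^n w) are also crossings for every positive integer n. -/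
open OrderDual

section LeftOrdered

variable {Γ : Type*} [Group Γ] [LinearOrder Γ]

theorem IsCrossing.toDual {f g u v w : Γ} (h : IsCrossing f g u v w) :
    IsCrossing (toDual g) (toDual f) (toDual v) (toDual u) (toDual w) := by
  obtain ⟨huw, hwv, hpow, M, N, hM, hN, hfv, hgu⟩ := h
  exact ⟨hwv, huw, fun n hn => (hpow n hn).symm, N, M, hN, hM, hgu, hfv⟩

variable [MulLeftMono Γ]

theorem le_pow_mul_of_le_mul {a x : Γ} (h : x ≤ a * x) : ∀ k : ℕ, x ≤ a ^ k * x
  | 0 => by simp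
  | k + 1 =>
    calc x ≤ a * x := h
      _ ≤ a * (a ^ k * x) := mul_le_mul_right (le_pow_mul_of_le_mul h k) a
      _ = a ^ (k + 1) * x := by rw [pow_succ', mul_assoc]

theorem lt_pow_mul_of_lt_mul_s8 {a x : Γ} (h : x < a * x) {k : ℕ} (hk : k ≠ 0) :
    x < a ^ k * x := by
  obtain ⟨k, rfl⟩ := Nat.exists_eq_succ_of_ne_zero hk
  calc x < a * x := h
    _ ≤ a * (a ^ k * x) := mul_le_mul_right (le_pow_mul_of_le_mul h.le k) a
    _ = a ^ (k + 1) * x := by rw [pow_succ', mul_assoc]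

theorem lt_pow_mul_iff_lt_mul {a x : Γ} {k : ℕ} (hk : k ≠ 0) : x < a ^ k * x ↔ x < a * x := by
  refine ⟨fun h => ?_, fun h => lt_pow_mul_of_lt_mul_s8 h hk⟩
  contrapose! h
  have := le_pow_mul_of_le_mul (le_inv_mul_iff_mul_le.2 h) k
  rwa [inv_pow, le_inv_mul_iff_mul_le] at this

variable {f g u v w : Γ}

theorem IsCrossing.g_pow_mul_w (h : IsCrossing f g u v w) {n : ℕ} (hn : 0 < n) :
    IsCrossing f g u v (g ^ n * w) := by
  obtain ⟨huw, hwv, hpow, M, N, hM, hN, hfv, hgu⟩ := h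
  have hgw : w < g ^ n * w :=
    (lt_pow_mul_iff_lt_mul hn.ne').2 <| (lt_pow_mul_iff_lt_mul hM.ne').1 <|
      hgu.trans_le (mul_le_mul_right huw.le _)
  have hgu' : g ^ n * w < g ^ (n + M) * u := by
    rw [pow_add, mul_assoc]
    exact mul_lt_mul_right hgu _
  exact ⟨huw.trans hgw, hgu'.trans (hpow _ (by omega)).1, hpow, n + M, N, by omega, hN,
    hfv.trans hgw, hgu'⟩

theorem IsCrossing.f_pow_mul_w (h : IsCrossing f g u v w) {n : ℕ} (hn : 0 < n) :
    IsCrossing f g u v (f ^ n * w) :=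
  (h.toDual.g_pow_mul_w hn).toDual

end LeftOrdered

/-- If `(f, g, u, v, w)` is a crossing, then `(f, g, u, v, gⁿ w)` and
`(f, g, u, v, fⁿ w)` are also crossings for every positive integer `n`. -/
theorem crossing_translate_w {Γ : Type*} [Group Γ] [LinearOrder Γ]
    [CovariantClass Γ Γ (· * ·) (· ≤ ·)] (f g u v w : Γ)
    (h : IsCrossing f g u v w) :
    ∀ n : ℕ, 0 < n →
      IsCrossing f g u v (g ^ n * w) ∧ IsCrossing f g u v (f ^ n * w) :=
  fun _ hn => ⟨h.g_pow_mul_w hn, h.f_pow_mul_w hn⟩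
end

section
/- Let (Γ, ⪯) be a left-ordered group admitting a crossing, and let 1 ⪯ h₁ ≺ h₂ be elements of Γ such that h₁ ∈ S and h₂ ∉ S. Then there exists a crossing (f', g', u', v', w') for (Γ, ⪯) such that h₁ ≺ u' ≺ v' ≺ h₂. -/
/-!
Since `h₂ ∉ S` and `h₂ > 1`, some crossing `(f, g, u, v, w)` has `1 ≤ u` and `w < h₂`; replacing
`f, g` by the powers from the definition we may assume `f * v < w < g * u`. Then
`(f * g, g * f, f * g * u, g * f * v, w)` is again a crossing, and translating it on the left
by `f` gives one with `u' = f * f * g * u` and `v' = f * g * f * v`. Now `v' < f * v < w < h₂`,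
while `f * f * w < u'` and `h₁ ≤ f * f * w`, because `f * f * w` is the middle point of the
crossing `(f, g, u, v, f * f * w)` and `h₁ ∈ S`.
-/

section Monoid

variable {M : Type*} [Monoid M]

theorem pow_two_mul (a x : M) : a ^ 2 * x = a * (a * x) := by
  rw [sq, mul_assoc]

theorem pow_three_mul (a x : M) : a ^ 3 * x = a * (a * (a * x)) := by
  rw [pow_succ', mul_assoc, pow_two_mul]

end Monoid

section LeftOrderedGroup

variable {Γ : Type*} [Group Γ] [LinearOrder Γ]

theorem le_of_mem_conradSet_of_isCrossing {h f g u v w : Γ} (hh : h ∈ ConradSet Γ)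
    (hc : IsCrossing f g u v w) (hu : 1 ≤ u) : h ≤ w := by
  rcases hh with (rfl | ⟨-, hS⟩) | ⟨hh, -⟩
  · exact hu.trans hc.1.le
  · exact hS f g u v w hc hu
  · exact (hh.le.trans hu).trans hc.1.le

theorem exists_isCrossing_of_one_lt_of_notMem_conradSet {h : Γ} (hh : 1 < h)
    (hS : h ∉ ConradSet Γ) : ∃ f g u v w : Γ, IsCrossing f g u v w ∧ 1 ≤ u ∧ w < h := by
  by_contra! hcon
  exact hS (Or.inl (Or.inr ⟨hh, hcon⟩))

namespace IsCrossing

variable {f g u v w : Γ}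

theorem pow_mul_lt (h : IsCrossing f g u v w) {n : ℕ} (hn : 0 < n) : g ^ n * u < v :=
  (h.2.2.1 n hn).1

theorem lt_pow_mul (h : IsCrossing f g u v w) {n : ℕ} (hn : 0 < n) : u < f ^ n * v :=
  (h.2.2.1 n hn).2

theorem exists_pow_pow (h : IsCrossing f g u v w) :
    ∃ F G : Γ, IsCrossing F G u v w ∧ F * v < w ∧ w < G * u := by
  obtain ⟨M, N, hM, hN, hfN, hgM⟩ := h.2.2.2
  refine ⟨f ^ N, g ^ M, ⟨h.1, h.2.1, fun n hn => ⟨?_, ?_⟩, 1, 1, one_pos, one_pos, ?_, ?_⟩,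
    hfN, hgM⟩
  · rw [← pow_mul]; exact h.pow_mul_lt (Nat.mul_pos hM hn)
  · rw [← pow_mul]; exact h.lt_pow_mul (Nat.mul_pos hN hn)
  · rwa [pow_one]
  · rwa [pow_one]

end IsCrossing

variable [CovariantClass Γ Γ (· * ·) (· ≤ ·)]

theorem pow_mul_lt_of_mul_le {a x y : Γ} (ha : a * y ≤ y) (hx : x < y) (n : ℕ) :
    a ^ n * x < y := by
  induction n with
  | zero => simpa using hx
  | succ n ih =>
    calc a ^ (n + 1) * x = a * (a ^ n * x) := by rw [pow_succ', mul_assoc]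
      _ < a * y := mul_lt_mul_right ih a
      _ ≤ y := ha

theorem lt_pow_mul_of_le_mul {a x y : Γ} (ha : y ≤ a * y) (hx : y < x) (n : ℕ) :
    y < a ^ n * x := by
  induction n with
  | zero => simpa using hx
  | succ n ih =>
    calc y ≤ a * y := ha
      _ < a * (a ^ n * x) := mul_lt_mul_right ih a
      _ = a ^ (n + 1) * x := by rw [pow_succ', mul_assoc]

namespace IsCrossing

variable {f g u v w : Γ}

theorem conj (h : IsCrossing f g u v w) (a : Γ) :
    IsCrossing (a * f * a⁻¹) (a * g * a⁻¹) (a * u) (a * v) (a * w) := by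
  obtain ⟨huw, hwv, horb, M, N, hM, hN, hfN, hgM⟩ := h
  refine ⟨mul_lt_mul_right huw a, mul_lt_mul_right hwv a, fun n hn => ⟨?_, ?_⟩,
    M, N, hM, hN, ?_, ?_⟩ <;> rw [conj_pow] <;> simp only [mul_assoc, inv_mul_cancel_left]
  · exact mul_lt_mul_right (horb n hn).1 a
  · exact mul_lt_mul_right (horb n hn).2 a
  · exact mul_lt_mul_right hfN a
  · exact mul_lt_mul_right hgM a

theorem mul_mul_lt (h : IsCrossing f g u v w) (hf : f * v < w) (hg : w < g * u) :
    g * (f * v) < v :=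
  calc g * (f * v) < g * (g * u) := mul_lt_mul_right (hf.trans hg) g
    _ < v := by simpa only [pow_two_mul] using h.pow_mul_lt two_pos

theorem mul_mul_middle (h : IsCrossing f g u v w) (hf : f * v < w) (hg : w < g * u) :
    IsCrossing f g u v (f * (f * w)) := by
  have hfw : f * w < w := (mul_lt_mul_right h.2.1 f).trans hf
  have hffw : f * (f * w) < w := (mul_lt_mul_right hfw f).trans hfw
  have hfffv : f * (f * (f * v)) < f * (f * w) := mul_lt_mul_right (mul_lt_mul_right hf f) f
  refine ⟨?_, hffw.trans h.2.1, h.2.2.1, 1, 3, one_pos, three_pos, ?_, ?_⟩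
  · refine lt_trans ?_ hfffv
    simpa only [pow_three_mul] using h.lt_pow_mul three_pos
  · rwa [pow_three_mul]
  · rw [pow_one]; exact hffw.trans hg

theorem mul_mul (h : IsCrossing f g u v w) (hf : f * v < w) (hg : w < g * u) :
    IsCrossing (f * g) (g * f) (f * (g * u)) (g * (f * v)) w := by
  have hgu : g * u < v := by simpa using h.pow_mul_lt one_pos
  have hufv : u < f * v := by simpa using h.lt_pow_mul one_pos
  have hgggu : g * (g * (g * u)) < v := by simpa only [pow_three_mul] using h.pow_mul_lt three_pos
  have huffv : u < f * (f * v) := by simpa only [pow_two_mul] using h.lt_pow_mul two_pos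
  have hufffv : u < f * (f * (f * v)) := by
    simpa only [pow_three_mul] using h.lt_pow_mul three_pos
  have hfvgu : f * v < g * u := hf.trans hg
  have hu'w : f * (g * u) < w := (mul_lt_mul_right hgu f).trans hf
  have hwv' : w < g * (f * v) := hg.trans (mul_lt_mul_right hufv g)
  have hv'v : g * f * v ≤ v := by rw [mul_assoc]; exact (h.mul_mul_lt hf hg).le
  have huu' : u ≤ f * g * u := by
    rw [mul_assoc]; exact (huffv.trans (mul_lt_mul_right hfvgu f)).le
  refine ⟨hu'w, hwv', fun n hn => ?_, 1, 1, one_pos, one_pos, ?_, ?_⟩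
  · obtain ⟨k, rfl⟩ := Nat.exists_eq_add_one_of_ne_zero hn.ne'
    constructor
    · calc (g * f) ^ (k + 1) * (f * (g * u)) = g * f * ((g * f) ^ k * (f * (g * u))) := by
            rw [pow_succ', mul_assoc]
        _ < g * f * v := mul_lt_mul_right (pow_mul_lt_of_mul_le hv'v (hu'w.trans h.2.1) k) _
        _ = g * (f * v) := mul_assoc g f v
    · calc f * (g * u) = f * g * u := (mul_assoc f g u).symm
        _ < f * g * ((f * g) ^ k * (g * (f * v))) :=
            mul_lt_mul_right (lt_pow_mul_of_le_mul huu' (h.1.trans hwv') k) _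
        _ = (f * g) ^ (k + 1) * (g * (f * v)) := by rw [pow_succ', mul_assoc (f * g)]
  · rw [pow_one, mul_assoc]
    refine lt_trans (mul_lt_mul_right ?_ f) hf
    exact (mul_lt_mul_right (mul_lt_mul_right hfvgu g) g).trans hgggu
  · rw [pow_one, mul_assoc]
    refine hg.trans (mul_lt_mul_right ?_ g)
    exact hufffv.trans (mul_lt_mul_right (mul_lt_mul_right hfvgu f) f)

end IsCrossing

end LeftOrderedGroup

theorem crossing_between_general {Γ : Type*} [Group Γ] [LinearOrder Γ]
    [CovariantClass Γ Γ (· * ·) (· ≤ ·)]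
    (h₁ h₂ : Γ) (h₁pos : 1 ≤ h₁) (hlt : h₁ < h₂)
    (h₁S : h₁ ∈ ConradSet Γ) (h₂S : h₂ ∉ ConradSet Γ) :
    ∃ f' g' u' v' w' : Γ, IsCrossing f' g' u' v' w' ∧
      h₁ < u' ∧ u' < v' ∧ v' < h₂ := by
  obtain ⟨f, g, u, v, w, hc, hu, hwh₂⟩ :=
    exists_isCrossing_of_one_lt_of_notMem_conradSet (h₁pos.trans_lt hlt) h₂S
  obtain ⟨F, G, hc, hF, hG⟩ := hc.exists_pow_pow
  have hc' := (hc.mul_mul hF hG).conj F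
  refine ⟨_, _, _, _, _, hc', ?_, hc'.1.trans hc'.2.1, ?_⟩
  · calc h₁ ≤ F * (F * w) := le_of_mem_conradSet_of_isCrossing h₁S (hc.mul_mul_middle hF hG) hu
      _ < F * (F * (G * u)) := mul_lt_mul_right (mul_lt_mul_right hG F) F
  · calc F * (G * (F * v)) < F * v := mul_lt_mul_right (hc.mul_mul_lt hF hG) F
      _ < w := hF
      _ < h₂ := hwh₂

/-- If `(Γ, ≤)` admits a crossing and `1 ≤ h₁ < h₂` with `h₁ ∈ S` and `h₂ ∉ S`,
then there is a crossing `(f', g', u', v', w')` with `h₁ < u' < v' < h₂`. -/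
theorem crossing_between {Γ : Type*} [Group Γ] [LinearOrder Γ]
    [CovariantClass Γ Γ (· * ·) (· ≤ ·)]
    (hex : ∃ f g u v w : Γ, IsCrossing f g u v w)
    (h₁ h₂ : Γ) (h₁pos : 1 ≤ h₁) (hlt : h₁ < h₂)
    (h₁S : h₁ ∈ ConradSet Γ) (h₂S : h₂ ∉ ConradSet Γ) :
    ∃ f' g' u' v' w' : Γ, IsCrossing f' g' u' v' w' ∧
      h₁ < u' ∧ u' < v' ∧ v' < h₂ :=
  crossing_between_general h₁ h₂ h₁pos hlt h₁S h₂S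
end

section
/- Let (Γ, ⪯) be a left-ordered group such that ⪯ is not Conradian and such that every subgroup of Γ that is ⪯-convex and whose restricted ordering is Conradian is trivial. Then ⪯ is approximated by its conjugates: for every finite set f₁, …, f_k of ⪯-positive elements there exists h ∈ Γ such that the conjugate ordering ⪯_h is distinct from ⪯ and each f_i is ⪯_h-positive. -/
section Aux

variable {Γ : Type*} [Group Γ] [LinearOrder Γ]

/-- `p` is a point whose conjugation preserves positivity. -/
def InN (p : Γ) : Prop := ∀ g : Γ, 1 < p⁻¹ * g * p ↔ 1 < g

lemma inN_one : InN (1 : Γ) := fun g => by simp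

lemma inN_mul {p q : Γ} (hp : InN p) (hq : InN q) : InN (p * q) := by
  intro g
  have h1 : (p * q)⁻¹ * g * (p * q) = q⁻¹ * (p⁻¹ * g * p) * q := by group
  rw [h1]
  exact (hq _).trans (hp g)

lemma inN_inv {p : Γ} (hp : InN p) : InN p⁻¹ := by
  intro g
  have h2 : p⁻¹⁻¹ * g * p⁻¹ = p * g * p⁻¹ := by group
  have h3 := hp (p * g * p⁻¹)
  have h1 : p⁻¹ * (p * g * p⁻¹) * p = g := by group
  rw [h1] at h3
  rw [h2]
  exact h3.symm

variable [CovariantClass Γ Γ (· * ·) (· ≤ ·)]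

lemma aux_mul_lt_mul_left (c : Γ) {a b : Γ} (h : a < b) : c * a < c * b :=
  (mul_le_mul_right h.le c).lt_of_ne fun e => h.ne (mul_left_cancel e)

/-- The subgroup of all `p` such that every point between `1` and `p`
has positivity-preserving conjugation. -/
def goodSubgroup (Γ : Type*) [Group Γ] [LinearOrder Γ]
    [CovariantClass Γ Γ (· * ·) (· ≤ ·)] : Subgroup Γ where
  carrier := {p | (∀ q : Γ, 1 ≤ q → q ≤ p → InN q) ∧ (∀ q : Γ, p ≤ q → q ≤ 1 → InN q)}
  one_mem' := ⟨fun q h1 h2 => by rw [le_antisymm h2 h1]; exact inN_one,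
               fun q h1 h2 => by rw [le_antisymm h2 h1]; exact inN_one⟩
  mul_mem' := by
    rintro a b ⟨ha1, ha2⟩ ⟨hb1, hb2⟩
    have hNa : InN a := by
      rcases le_total 1 a with h | h
      · exact ha1 a h le_rfl
      · exact ha2 a le_rfl h
    constructor
    · intro q h1 h2
      rcases le_or_gt q a with h | h
      · exact ha1 q h1 h
      · have k1 : (1 : Γ) < a⁻¹ * q := by
          have := aux_mul_lt_mul_left a⁻¹ h; simpa using this
        have k2 : a⁻¹ * q ≤ b := by
          have := mul_le_mul_right h2 a⁻¹; simpa using this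
        have hin : InN (a⁻¹ * q) := hb1 _ k1.le k2
        have := inN_mul hNa hin
        simpa using this
    · intro q h1 h2
      rcases le_or_gt a q with h | h
      · exact ha2 q h h2
      · have k1 : a⁻¹ * q < 1 := by
          have := aux_mul_lt_mul_left a⁻¹ h; simpa using this
        have k2 : b ≤ a⁻¹ * q := by
          have := mul_le_mul_right h1 a⁻¹; simpa using this
        have hin : InN (a⁻¹ * q) := hb2 _ k2 k1.le
        have := inN_mul hNa hin
        simpa using this
  inv_mem' := by
    rintro a ⟨ha1, ha2⟩
    have hNa : InN a := by
      rcases le_total 1 a with h | h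
      · exact ha1 a h le_rfl
      · exact ha2 a le_rfl h
    constructor
    · intro q h1 h2
      have k1 : a ≤ a * q := by
        have := mul_le_mul_right h1 a; simpa using this
      have k2 : a * q ≤ 1 := by
        have := mul_le_mul_right h2 a; simpa using this
      have hin : InN (a * q) := ha2 _ k1 k2
      have := inN_mul (inN_inv hNa) hin
      simpa using this
    · intro q h1 h2
      have k1 : (1 : Γ) ≤ a * q := by
        have := mul_le_mul_right h1 a; simpa using this
      have k2 : a * q ≤ a := by
        have := mul_le_mul_right h2 a; simpa using this
      have hin : InN (a * q) := ha1 _ k1 k2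
      have := inN_mul (inN_inv hNa) hin
      simpa using this

lemma mem_goodSubgroup {p : Γ} : p ∈ goodSubgroup Γ ↔
    ((∀ q : Γ, 1 ≤ q → q ≤ p → InN q) ∧ (∀ q : Γ, p ≤ q → q ≤ 1 → InN q)) := Iff.rfl

lemma goodSubgroup_convex : IsConvexSubgroup (goodSubgroup Γ) := by
  intro c₁ hc₁ c₂ hc₂ x h1 h2
  rw [mem_goodSubgroup] at hc₁ hc₂ ⊢
  exact ⟨fun q hq1 hq2 => hc₂.1 q hq1 (hq2.trans h2.le),
         fun q hq1 hq2 => hc₁.2 q (h1.le.trans hq1) hq2⟩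

lemma goodSubgroup_conradianOn : IsConradianOn (goodSubgroup Γ) := by
  intro f hf g hg hf1 hg1
  refine ⟨1, one_pos, ?_⟩
  rw [mem_goodSubgroup] at hg
  have hNg : InN g := hg.1 g hg1.le le_rfl
  have h1 : 1 < g⁻¹ * f * g := (hNg f).mpr hf1
  have h2 := aux_mul_lt_mul_left g h1
  rw [pow_one]
  simpa [mul_assoc] using h2

end Aux

/-- If the ordering of a left-ordered group is not Conradian and every convex
subgroup with Conradian restricted ordering is trivial (i.e. the Conradian soul is
trivial), then the ordering is approximated by its conjugates: for every finite set
of positive elements there exists `h` such that the conjugate ordering `≤_h`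
(defined by `1 <_h g ↔ 1 < h g h⁻¹`) is distinct from `≤` and all given elements
remain `≤_h`-positive. -/
theorem approx_by_conjugates_of_trivial_soul (Γ : Type*) [Group Γ] [LinearOrder Γ]
    [CovariantClass Γ Γ (· * ·) (· ≤ ·)]
    (hnc : ¬ IsConradian Γ)
    (htriv : ∀ C : Subgroup Γ, IsConvexSubgroup C → IsConradianOn C → C = ⊥) :
    ∀ F : Finset Γ, (∀ f ∈ F, 1 < f) →
      ∃ h : Γ, (¬ ∀ g : Γ, (1 < h * g * h⁻¹ ↔ 1 < g)) ∧
        ∀ f ∈ F, 1 < h * f * h⁻¹ := by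
  intro F hF
  have hIbot : goodSubgroup Γ = ⊥ := htriv _ goodSubgroup_convex goodSubgroup_conradianOn
  rcases F.eq_empty_or_nonempty with rfl | hne
  · have hq : ∃ q : Γ, ¬ InN q := by
      by_contra hc
      push_neg at hc
      apply hnc
      intro f g hf1 hg1
      refine ⟨1, one_pos, ?_⟩
      have h1 : 1 < g⁻¹ * f * g := (hc g f).mpr hf1
      have h2 := aux_mul_lt_mul_left g h1
      rw [pow_one]
      simpa [mul_assoc] using h2
    obtain ⟨q, hq⟩ := hq
    refine ⟨q⁻¹, ?_, by simp⟩
    intro hcon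
    exact hq fun g => by simpa using hcon g
  · set u := F.min' hne with hu_def
    have hu1 : 1 < u := hF _ (F.min'_mem hne)
    set Fi := F.image (·⁻¹) with hFi_def
    have hFine : Fi.Nonempty := hne.image _
    set l := Fi.max' hFine with hl_def
    have hl1 : l < 1 := by
      obtain ⟨f₀, hf₀, hfl⟩ := Finset.mem_image.mp (Fi.max'_mem hFine)
      have hf₀1 : 1 < f₀ := hF _ hf₀
      have := aux_mul_lt_mul_left f₀⁻¹ hf₀1
      rw [hl_def.trans hfl.symm]
      simpa using this
    have key : ∃ q, l ≤ q ∧ q ≤ u ∧ ¬ InN q := by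
      by_contra hc
      push_neg at hc
      have hmem : u ∈ goodSubgroup Γ := by
        rw [mem_goodSubgroup]
        constructor
        · intro q h1 h2
          exact hc q (hl1.le.trans h1) h2
        · intro q h1 h2
          exact absurd (h1.trans h2) (not_le.mpr hu1)
      rw [hIbot, Subgroup.mem_bot] at hmem
      exact hu1.ne' hmem
    obtain ⟨q, hlq, hqu, hq⟩ := key
    refine ⟨q⁻¹, ?_, ?_⟩
    · intro hcon
      exact hq fun g => by simpa using hcon g
    · intro f hf
      have hf1 : 1 < f := hF f hf
      have hq_le_f : q ≤ f := hqu.trans (F.min'_le f hf)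
      have hfinv_le : f⁻¹ ≤ q := (Fi.le_max' _ (Finset.mem_image_of_mem _ hf)).trans hlq
      have hle : q ≤ f * q := by
        rcases le_total 1 q with h | h
        · have h1 := mul_le_mul_right h f
          calc q ≤ f := hq_le_f
            _ ≤ f * q := by simpa using h1
        · have h1 : (1 : Γ) ≤ f * q := by
            have := mul_le_mul_right hfinv_le f; simpa using this
          exact h.trans h1
      have hfq : q < f * q :=
        hle.lt_of_ne fun e => hf1.ne' (mul_right_cancel ((one_mul q).trans e)).symm
      have := aux_mul_lt_mul_left q⁻¹ hfq
      simpa [mul_assoc] using this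
end

section
/- Let (Γ, ⪯) be a left-ordered group and let C be the Conradian soul of (Γ, ⪯). For every c ≻ 1 with c ∉ C there is a crossing (f, g, u, v, w) for (Γ, ⪯) such that u, v, w do not belong to C and 1 ≺ u ≺ w ≺ v ≺ c. -/
/-- `C` is the Conradian soul. -/
def IsConradianSoul {Γ : Type*} [Group Γ] [LinearOrder Γ] (C : Subgroup Γ) : Prop :=
  IsConvexSubgroup C ∧ IsConradianOn C ∧
  ∀ K : Subgroup Γ, IsConvexSubgroup K → IsConradianOn K → K ≤ C


/-!
A non-Conradian pair `f, g` (`1 < f`, `1 < g` and `f * g ^ n ≤ g` for all `n > 0`) yields, at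
every base point `s`, the crossing `(s f s⁻¹, s g s⁻¹, s, s f⁻¹ g, s g)`; for `s = t f` with
`1 < t ∉ C` its three points `t f < t f g < t g` lie outside the convex subgroup `C`. Say `b` is
crossed if such a crossing lies below `b`. The elements `x` such that neither `x` nor `x⁻¹` is
crossed form a subgroup: if `x y` is crossed at `t` but `x` is not, then `x ≤ t f² g`, and one of
the points `x⁻¹ t f g`, `x⁻¹ t f`, `x⁻¹ t f² g` shows that `y` is crossed; if none does, then
`g⁻¹ f⁻¹ g ∈ C` lies above the positive element `(x⁻¹ t f)⁻¹ ∉ C`. This subgroup is convex since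
being crossed is upward closed, and Conradian since a non-Conradian pair `f, g` in it would make
`g²` crossed. Hence it lies in the Conradian soul, so every `c > 1` outside the soul is crossed.
-/
section LinearOrder

variable {Γ : Type*} [Group Γ] [LinearOrder Γ] {C : Subgroup Γ}

theorem IsConvexSubgroup.lt_of_mem_of_notMem (hC : IsConvexSubgroup C) {c q : Γ} (hq : 1 < q)
    (hqC : q ∉ C) (hc : c ∈ C) : c < q := by
  by_contra! h
  exact hqC <| (eq_or_lt_of_le h).elim (fun he => he ▸ hc) (hC 1 C.one_mem c hc q hq)

theorem IsConvexSubgroup.notMem_of_le (hC : IsConvexSubgroup C) {p q : Γ} (hp : 1 < p)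
    (hpC : p ∉ C) (hpq : p ≤ q) : q ∉ C :=
  fun hqC => (hC.lt_of_mem_of_notMem hp hpC hqC).not_ge hpq

structure IsNonConradianPair (f g : Γ) : Prop where
  one_lt_left : 1 < f
  one_lt_right : 1 < g
  mul_pow_le : ∀ n : ℕ, 0 < n → f * g ^ n ≤ g

theorem isConradianOn_iff_forall_not_isNonConradianPair :
    IsConradianOn C ↔ ∀ f ∈ C, ∀ g ∈ C, ¬IsNonConradianPair f g := by
  refine forall₂_congr fun f _ => forall₂_congr fun g _ => ⟨?_, ?_⟩
  · rintro h ⟨hf, hg, hle⟩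
    obtain ⟨n, hn, hlt⟩ := h hf hg
    exact (hle n hn).not_gt hlt
  · intro h hf hg
    by_contra! hle
    exact h ⟨hf, hg, hle⟩

/-- The crossing meant is `IsNonConradianPair.isCrossing` at `s = t * f`, with points
`u = t * f`, `w = t * f * g` and `v = t * g`. -/
def HasCrossingBelow (C : Subgroup Γ) (b : Γ) : Prop :=
  ∃ f g t : Γ, IsNonConradianPair f g ∧ 1 < t ∧ t ∉ C ∧ t * g < b

theorem HasCrossingBelow.mono {b b' : Γ} (h : HasCrossingBelow C b) (hb : b ≤ b') :
    HasCrossingBelow C b' := by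
  obtain ⟨f, g, t, hfg, ht, htC, htb⟩ := h
  exact ⟨f, g, t, hfg, ht, htC, htb.trans_le hb⟩

end LinearOrder

section LeftOrdered

variable {Γ : Type*} [Group Γ] [LinearOrder Γ] [MulLeftMono Γ] {C : Subgroup Γ}

namespace IsNonConradianPair

variable {f g : Γ} (h : IsNonConradianPair f g)
include h

theorem mul_pow_lt (n : ℕ) : f * g ^ n < g :=
  calc f * g ^ n < f * g ^ (n + 1) :=
        mul_lt_mul_right (pow_succ g n ▸ lt_mul_of_one_lt_right' _ h.one_lt_right) f
    _ ≤ g := h.mul_pow_le (n + 1) n.succ_pos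

theorem mul_lt : f * g < g := by
  simpa using h.mul_pow_lt 1

theorem mul_mul_lt : f * (g * g) < g := by
  simpa [pow_two] using h.mul_pow_lt 2

theorem lt_inv_mul : g < f⁻¹ * g :=
  lt_inv_mul_iff_mul_lt.2 h.mul_lt

theorem mul_lt_inv_mul : g * g < f⁻¹ * g :=
  lt_inv_mul_iff_mul_lt.2 h.mul_mul_lt

theorem right_notMem (hC : IsConvexSubgroup C) (hC' : IsConradianOn C) : g ∉ C := fun hg =>
  have hfg : f < g := (lt_mul_of_one_lt_right' f h.one_lt_right).trans h.mul_lt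
  isConradianOn_iff_forall_not_isNonConradianPair.1 hC' f
    (hC 1 C.one_mem g hg f h.one_lt_left hfg) g hg h

theorem isCrossing (s : Γ) :
    IsCrossing (s * f * s⁻¹) (s * g * s⁻¹) s (s * (f⁻¹ * g)) (s * g) := by
  refine ⟨lt_mul_of_one_lt_right' s h.one_lt_right, mul_lt_mul_right h.lt_inv_mul s,
    fun n hn => ⟨?_, ?_⟩, 2, 2, two_pos, two_pos, ?_, ?_⟩
  · rw [conj_pow, inv_mul_cancel_right]
    exact mul_lt_mul_right (lt_inv_mul_iff_mul_lt.2 (h.mul_pow_lt n)) s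
  · rw [conj_pow, mul_assoc, mul_assoc, inv_mul_cancel_left]
    exact lt_mul_of_one_lt_right' s (Left.one_lt_mul_of_le_of_lt
      (one_le_pow_of_one_le' h.one_lt_left.le n) (h.one_lt_right.trans h.lt_inv_mul))
  · rw [conj_pow, mul_assoc, mul_assoc, inv_mul_cancel_left, pow_two, mul_assoc,
      mul_inv_cancel_left]
    exact mul_lt_mul_right h.mul_lt s
  · rw [conj_pow, inv_mul_cancel_right, pow_two]
    exact mul_lt_mul_right (lt_mul_of_one_lt_right' g h.one_lt_right) s

end IsNonConradianPair

namespace HasCrossingBelow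

variable {b : Γ}

theorem one_lt (h : HasCrossingBelow C b) : 1 < b := by
  obtain ⟨f, g, t, hfg, ht, -, htb⟩ := h
  exact ht.trans ((lt_mul_of_one_lt_right' t hfg.one_lt_right).trans htb)

theorem exists_isCrossing (hC : IsConvexSubgroup C) (h : HasCrossingBelow C b) :
    ∃ f g u v w : Γ, IsCrossing f g u v w ∧
      u ∉ C ∧ v ∉ C ∧ w ∉ C ∧ 1 < u ∧ u < w ∧ w < v ∧ v < b := by
  obtain ⟨f, g, t, hfg, ht, htC, htb⟩ := h
  have hcross := hfg.isCrossing (t * f)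
  rw [show t * f * (f⁻¹ * g) = t * g by group] at hcross
  have htu : t < t * f := lt_mul_of_one_lt_right' t hfg.one_lt_left
  have huw := hcross.1
  have hwv := hcross.2.1
  exact ⟨_, _, _, _, _, hcross, hC.notMem_of_le ht htC htu.le,
    hC.notMem_of_le ht htC (htu.trans (huw.trans hwv)).le,
    hC.notMem_of_le ht htC (htu.trans huw).le, ht.trans htu, huw, hwv, htb⟩

end HasCrossingBelow

theorem hasCrossingBelow_of_mul_lt (hC : IsConvexSubgroup C) {f g a y : Γ}
    (hfg : IsNonConradianPair f g) (hgC : g ∉ C) (ha : 1 ≤ a * f * f * g) (hay : a * g < y) :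
    HasCrossingBelow C y := by
  have hfgy : a * f * g < y := by
    rw [mul_assoc a]; exact (mul_lt_mul_right hfg.mul_lt a).trans hay
  have hfg_pos : 1 < a * f * g := by
    refine ha.trans_lt ?_
    rw [mul_assoc (a * f)]; exact mul_lt_mul_right hfg.mul_lt (a * f)
  rcases em' (a * f * g ∈ C) with hC₁ | hC₁
  · refine ⟨f, g, a * f * g, hfg, hfg_pos, hC₁, ?_⟩
    rw [mul_assoc (a * f), mul_assoc a]
    exact (mul_lt_mul_right hfg.mul_mul_lt a).trans hay
  have hC₂ : a * f ∉ C := fun h => hgC ((C.mul_mem_cancel_left h).1 hC₁)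
  rcases lt_or_gt_of_ne (ne_of_mem_of_not_mem C.one_mem hC₂) with hgt | hlt
  · refine ⟨f, g, a * f, hfg, hgt, hC₂, ?_⟩
    rw [mul_assoc a]; exact (mul_lt_mul_right hfg.mul_lt a).trans hay
  rcases em' (a * f * f * g ∈ C) with hC₃ | hC₃
  · refine ⟨f, g, a * f * f * g, hfg, ha.lt_of_ne (ne_of_mem_of_not_mem C.one_mem hC₃), hC₃, ?_⟩
    rw [mul_assoc (a * f * f), mul_assoc (a * f)]
    exact (mul_lt_mul_right hfg.mul_mul_lt (a * f)).trans hfgy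
  have hconj : g⁻¹ * (f⁻¹ * g) ∈ C := by
    rw [show g⁻¹ * (f⁻¹ * g) = (a * f * f * g)⁻¹ * (a * f * g) by group]
    exact C.mul_mem (C.inv_mem hC₃) hC₁
  have hbelow : g⁻¹ * (f⁻¹ * g) < (a * f)⁻¹ :=
    hC.lt_of_mem_of_notMem (Left.one_lt_inv_iff.2 hlt) (mt C.inv_mem_iff.1 hC₂) hconj
  have hinv_lt : (a * f)⁻¹ < g := inv_lt_iff_one_lt_mul'.2 hfg_pos
  have habove : (a * f)⁻¹ < g⁻¹ * (f⁻¹ * g) :=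
    lt_inv_mul_iff_mul_lt.2 ((mul_lt_mul_right hinv_lt g).trans hfg.mul_lt_inv_mul)
  exact (lt_irrefl _ (hbelow.trans habove)).elim

theorem HasCrossingBelow.of_mul (hC : IsConvexSubgroup C) (hC' : IsConradianOn C) {x y : Γ}
    (h : HasCrossingBelow C (x * y)) (hx : ¬HasCrossingBelow C x) : HasCrossingBelow C y := by
  obtain ⟨f, g, t, hfg, ht, htC, hty⟩ := h
  have htff : t < t * f * f :=
    (lt_mul_of_one_lt_right' t hfg.one_lt_left).trans (lt_mul_of_one_lt_right' _ hfg.one_lt_left)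
  have hx_le : x ≤ t * f * f * g := by
    by_contra! hlt
    exact hx ⟨f, g, t * f * f, hfg, ht.trans htff, hC.notMem_of_le ht htC htff.le, hlt⟩
  refine hasCrossingBelow_of_mul_lt hC hfg (hfg.right_notMem hC hC') (a := x⁻¹ * t) ?_ ?_
  · simpa [mul_assoc, le_inv_mul_iff_mul_le] using hx_le
  · rw [mul_assoc]; exact inv_mul_lt_iff_lt_mul.2 hty

def crossingFreeSubgroup (hC : IsConvexSubgroup C) (hC' : IsConradianOn C) : Subgroup Γ where
  carrier := {x | ¬HasCrossingBelow C x ∧ ¬HasCrossingBelow C x⁻¹}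
  one_mem' := ⟨fun h => h.one_lt.false, fun h => (inv_one (G := Γ) ▸ h).one_lt.false⟩
  mul_mem' {x y} hx hy := by
    refine ⟨fun h => hy.1 (h.of_mul hC hC' hx.1), fun h => hx.2 ?_⟩
    rw [mul_inv_rev] at h
    exact h.of_mul hC hC' hy.2
  inv_mem' {x} hx := ⟨hx.2, (inv_inv x).symm ▸ hx.1⟩

variable {hC : IsConvexSubgroup C} {hC' : IsConradianOn C}

theorem mem_crossingFreeSubgroup_iff_of_one_le {x : Γ} (hx : 1 ≤ x) :
    x ∈ crossingFreeSubgroup hC hC' ↔ ¬HasCrossingBelow C x :=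
  ⟨And.left, fun h => ⟨h, fun h' => h'.one_lt.not_ge (Left.inv_le_one_iff.2 hx)⟩⟩

theorem isConvexSubgroup_crossingFreeSubgroup :
    IsConvexSubgroup (crossingFreeSubgroup hC hC') := by
  intro c₁ hc₁ c₂ hc₂ q hq₁ hq₂
  set K := crossingFreeSubgroup hC hC'
  have hpos : 1 < c₁⁻¹ * q := lt_inv_mul_iff_mul_lt.2 (by rwa [mul_one])
  have hmem : c₁⁻¹ * q ∈ K := (mem_crossingFreeSubgroup_iff_of_one_le hpos.le).2 fun h =>
    (K.mul_mem (K.inv_mem hc₁) hc₂).1 (h.mono (mul_le_mul_right hq₂.le c₁⁻¹))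
  exact (K.mul_mem_cancel_left (K.inv_mem hc₁)).1 hmem

theorem isConradianOn_crossingFreeSubgroup :
    IsConradianOn (crossingFreeSubgroup hC hC') := by
  refine isConradianOn_iff_forall_not_isNonConradianPair.2 fun f _ g hg hfg => ?_
  have hg₁ := hfg.one_lt_right
  have hgC := hfg.right_notMem hC hC'
  have hgf : g < g * f := lt_mul_of_one_lt_right' g hfg.one_lt_left
  have hcross : HasCrossingBelow C (g * g) := by
    refine ⟨f, g, g * f, hfg, hg₁.trans hgf, hC.notMem_of_le hg₁ hgC hgf.le, ?_⟩
    rw [mul_assoc]; exact mul_lt_mul_right hfg.mul_lt g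
  exact (mem_crossingFreeSubgroup_iff_of_one_le (Left.one_le_mul hg₁.le hg₁.le)).1
    ((crossingFreeSubgroup hC hC').mul_mem hg hg) hcross

end LeftOrdered

/-- For every `c > 1` not in the Conradian soul `C`, there is a crossing
`(f, g, u, v, w)` such that `u, v, w ∉ C` and `1 < u < w < v < c`. -/
theorem exists_crossing_outside_soul (Γ : Type*) [Group Γ] [LinearOrder Γ]
    [CovariantClass Γ Γ (· * ·) (· ≤ ·)]
    (C : Subgroup Γ) (hC : IsConradianSoul C)
    (c : Γ) (hc : 1 < c) (hcC : c ∉ C) :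
    ∃ f g u v w : Γ, IsCrossing f g u v w ∧
      u ∉ C ∧ v ∉ C ∧ w ∉ C ∧ 1 < u ∧ u < w ∧ w < v ∧ v < c := by
  obtain ⟨hconv, hcon, hmax⟩ := hC
  have hsoul : crossingFreeSubgroup hconv hcon ≤ C :=
    hmax _ isConvexSubgroup_crossingFreeSubgroup isConradianOn_crossingFreeSubgroup
  have hcross : HasCrossingBelow C c := by
    by_contra h
    exact hcC (hsoul ((mem_crossingFreeSubgroup_iff_of_one_le hc.le).2 h))
  exact hcross.exists_isCrossing hconv
end

section
/- Let (Γ, ⪯) be a left-ordered group and let C be the Conradian soul of (Γ, ⪯). Given c ≻ 1 with c ∉ C, there exists a ≻ 1 with a ∉ C and a ≺ c such that for all b with 1 ⪯ b ⪯ a and all c̄ ⪰ c, one has 1 ≺ b⁻¹ c̄ b and b⁻¹ c̄ b ∉ C. -/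
/-- Given `c > 1` with `c ∉ C` (the Conradian soul), there exists `a > 1` with
`a ∉ C` and `a < c` such that for all `1 ≤ b ≤ a` and all `c̄ ≥ c` one has
`1 < b⁻¹ c̄ b ∉ C`. -/
theorem exists_stable_conjugating_element (Γ : Type*) [Group Γ] [LinearOrder Γ]
    [CovariantClass Γ Γ (· * ·) (· ≤ ·)]
    (C : Subgroup Γ) (hC : IsConradianSoul C)
    (c : Γ) (hc : 1 < c) (hcC : c ∉ C) :
    ∃ a : Γ, 1 < a ∧ a ∉ C ∧ a < c ∧
      ∀ b : Γ, 1 ≤ b → b ≤ a → ∀ cbar : Γ, c ≤ cbar →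
        1 < b⁻¹ * cbar * b ∧ b⁻¹ * cbar * b ∉ C := by
  classical
  obtain ⟨hconv, hconr, hmax⟩ := hC
  -- left multiplication is strictly monotone
  have hlt : ∀ (z : Γ) {x y : Γ}, x < y → z * x < z * y := by
    intro z x y h
    exact (mul_le_mul_right h.le z).lt_of_ne fun e => h.ne (mul_left_cancel e)
  -- no element ≥ c can lie in C
  have hcup : ∀ cbar : Γ, c ≤ cbar → cbar ∈ C → False := by
    intro cbar hle hmem
    rcases eq_or_lt_of_le hle with rfl | hlt'
    · exact hcC hmem
    · exact hcC (hconv 1 C.one_mem cbar hmem c hc hlt')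
  -- key: if b is positive and not in C, then b⁻¹ is below every element of C
  have key : ∀ b : Γ, 1 < b → b ∉ C → ∀ x ∈ C, b⁻¹ < x := by
    intro b hb hbC x hx
    by_contra h
    push_neg at h
    have hbinv : b⁻¹ < 1 := by simpa using hlt b⁻¹ hb
    rcases eq_or_lt_of_le h with rfl | h'
    · exact hbC (by simpa using C.inv_mem hx)
    · exact hbC (inv_mem_iff.mp (hconv x hx 1 C.one_mem b⁻¹ h' hbinv))
  -- the main property holds for ANY a with 1 < a < c
  have main : ∀ a : Γ, 1 < a → a < c →
      ∀ b : Γ, 1 ≤ b → b ≤ a → ∀ cbar : Γ, c ≤ cbar →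
        1 < b⁻¹ * cbar * b ∧ b⁻¹ * cbar * b ∉ C := by
    intro a ha hac b hb1 hba cbar hcbar
    have hbc : b < c := lt_of_le_of_lt hba hac
    have hbcbar : b < cbar := lt_of_lt_of_le hbc hcbar
    constructor
    · have h1 : cbar ≤ cbar * b := by simpa using mul_le_mul_right hb1 cbar
      have h2 : b < cbar * b := lt_of_lt_of_le hbcbar h1
      simpa [mul_assoc] using hlt b⁻¹ h2
    · intro hdC
      by_cases hbC : b ∈ C
      · have e : b * (b⁻¹ * cbar * b) * b⁻¹ = cbar := by group
        exact hcup cbar hcbar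
          (by rw [← e]; exact C.mul_mem (C.mul_mem hbC hdC) (C.inv_mem hbC))
      · have hb : 1 < b := hb1.lt_of_ne fun e => hbC (e ▸ C.one_mem)
        have hx := key b hb hbC (b⁻¹ * cbar * b)⁻¹ (C.inv_mem hdC)
        have h2' : (b⁻¹ * cbar * b) * b⁻¹ < 1 := by
          have h2 := hlt (b⁻¹ * cbar * b) hx
          rwa [mul_inv_cancel] at h2
        have h3 := hlt b h2'
        have e2 : b * ((b⁻¹ * cbar * b) * b⁻¹) = cbar := by group
        rw [e2, mul_one] at h3
        exact absurd h3 (not_lt.mpr hbcbar.le)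
  -- now produce a suitable a
  by_cases htriv : ∀ x ∈ C, x = (1 : Γ)
  · by_cases hex : ∃ g : Γ, 1 < g ∧ g < c
    · obtain ⟨g, hg1, hgc⟩ := hex
      exact ⟨g, hg1, fun hgC => hg1.ne' (htriv g hgC), hgc, main g hg1 hgc⟩
    · exfalso
      push_neg at hex
      have hcmin : ∀ g : Γ, 1 < g → c ≤ g := hex
      -- positive powers of c exceed 1
      have hpown : ∀ n : ℕ, 1 < c ^ (n + 1) := by
        intro n
        induction n with
        | zero => simpa using hc
        | succ k ih =>
          have h1 : c ^ (k + 1) * 1 < c ^ (k + 1) * c := hlt _ hc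
          rw [mul_one] at h1
          rw [pow_succ]
          exact ih.trans h1
      have hpow : ∀ k : ℤ, 0 < k → 1 < c ^ k := by
        intro k hk
        obtain ⟨n, rfl⟩ : ∃ n : ℕ, k = (n : ℤ) + 1 := ⟨(k - 1).toNat, by omega⟩
        have e : ((n : ℤ) + 1) = ((n + 1 : ℕ) : ℤ) := by push_cast; ring
        rw [e, zpow_natCast]
        exact hpown n
      have hmono : ∀ m n : ℤ, m < n → c ^ m < c ^ n := by
        intro m n h
        have h1 : 1 < c ^ (n - m) := hpow _ (by omega)
        have h2 : c ^ m * 1 < c ^ m * c ^ (n - m) := hlt _ h1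
        rw [mul_one, ← zpow_add] at h2
        have e : m + (n - m) = n := by ring
        rw [e] at h2
        exact h2
      -- the cyclic subgroup generated by c is convex and Conradian
      have hconvK : IsConvexSubgroup (Subgroup.zpowers c) := by
        intro c₁ hc₁ c₂ hc₂ f h1 h2
        obtain ⟨m, rfl⟩ := Subgroup.mem_zpowers_iff.mp hc₁
        obtain ⟨k, rfl⟩ := Subgroup.mem_zpowers_iff.mp hc₂
        have Hbdd : ∃ bnd : ℤ, ∀ z : ℤ, c ^ z < f → z ≤ bnd := by
          refine ⟨k, fun z hz => ?_⟩
          by_contra hzk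
          push_neg at hzk
          exact absurd (hmono k z hzk) (not_lt.mpr (hz.trans h2).le)
        obtain ⟨j, hj, hjub⟩ := Int.exists_greatest_of_bdd Hbdd ⟨m, h1⟩
        have hfle : f ≤ c ^ (j + 1) := by
          by_contra h
          push_neg at h
          have := hjub _ h
          omega
        rcases eq_or_lt_of_le hfle with rfl | hflt
        · exact Subgroup.mem_zpowers_iff.mpr ⟨j + 1, rfl⟩
        · exfalso
          have ha1 : 1 < c ^ (-j) * f := by
            have h4 := hlt (c ^ (-j)) hj
            rw [← zpow_add] at h4
            simpa using h4
          have ha2 : c ^ (-j) * f < c := by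
            have h5 := hlt (c ^ (-j)) hflt
            rw [← zpow_add] at h5
            have e : -j + (j + 1) = 1 := by ring
            rw [e, zpow_one] at h5
            exact h5
          exact absurd (hcmin _ ha1) (not_le.mpr ha2)
      have hconrK : IsConradianOn (Subgroup.zpowers c) := by
        intro f hf g hg hf1 hg1
        obtain ⟨m, rfl⟩ := Subgroup.mem_zpowers_iff.mp hf
        obtain ⟨k, rfl⟩ := Subgroup.mem_zpowers_iff.mp hg
        have hm : 0 < m := by
          by_contra h
          push_neg at h
          rcases eq_or_lt_of_le h with rfl | h'
          · simp at hf1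
          · have h6 := hmono m 0 h'
            rw [zpow_zero] at h6
            exact absurd hf1 (not_lt.mpr h6.le)
        refine ⟨1, one_pos, ?_⟩
        rw [pow_one, ← zpow_add]
        exact hmono k (m + k) (by omega)
      exact hcC (hmax (Subgroup.zpowers c) hconvK hconrK (Subgroup.mem_zpowers c))
  · push_neg at htriv
    obtain ⟨x, hxC, hx1⟩ := htriv
    obtain ⟨y, hyC, hy1⟩ : ∃ y ∈ C, y < (1 : Γ) := by
      rcases lt_or_gt_of_ne hx1 with h | h
      · exact ⟨x, hxC, h⟩
      · exact ⟨x⁻¹, C.inv_mem hxC, by simpa using hlt x⁻¹ h⟩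
    have hainv : c⁻¹ < y := key c hc hcC y hyC
    have ha1 : 1 < c * y := by simpa using hlt c hainv
    have hac : c * y < c := by simpa using hlt c hy1
    have haC : c * y ∉ C := by
      intro h
      have e : (c * y) * y⁻¹ = c := by group
      exact hcC (e ▸ C.mul_mem h (C.inv_mem hyC))
    exact ⟨c * y, ha1, haC, hac, main _ ha1 hac⟩
end

section
/- Let (Γ, ⪯) be a left-ordered group and let C be the Conradian soul of (Γ, ⪯). Then for every g ∈ Γ the left coset gC is a ⪯-convex subset of Γ (i.e. if x, y ∈ gC and x ≺ z ≺ y then z ∈ gC). Moreover, for every crossing (f, g, u, v, w) for (Γ, ⪯) one has u h₁ ≺ w h₂ ≺ v h₃ for all h₁, h₂, h₃ ∈ C. -/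
open Pointwise

section Aux

variable {Γ : Type*} [Group Γ] [LinearOrder Γ] [CovariantClass Γ Γ (· * ·) (· ≤ ·)]

/-- Left multiplication is strictly monotone. -/
private lemma lmul (a : Γ) {x y : Γ} (h : x < y) : a * x < a * y :=
  (mul_le_mul_right h.le a).lt_of_ne (fun hc => h.ne (mul_left_cancel hc))

private lemma lcan (a : Γ) {x y : Γ} (h : a * x < a * y) : x < y := by
  have := lmul a⁻¹ h
  simpa [inv_mul_cancel_left] using this

private lemma convex_mem {C : Subgroup Γ} (h : IsConvexSubgroup C) {c₁ c₂ x : Γ}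
    (h1 : c₁ ∈ C) (h2 : c₂ ∈ C) (hl : c₁ ≤ x) (hr : x ≤ c₂) : x ∈ C := by
  rcases hl.eq_or_lt with rfl | hl
  · exact h1
  rcases hr.eq_or_lt with rfl | hr
  · exact h2
  exact h _ h1 _ h2 _ hl hr

private lemma conjpow (c b : Γ) (k n : ℕ) :
    (c⁻¹ * b ^ k * c) ^ n = c⁻¹ * b ^ (k * n) * c := by
  induction n with
  | zero => simp
  | succ n ih => rw [pow_succ, ih, Nat.mul_succ, pow_add]; group

/-- Main lemma, `u`-side: if a crossing exists, then `u⁻¹ * w ∉ C` for any convex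
subgroup `C` on which the order is Conradian. -/
private lemma lemA {C : Subgroup Γ} (hconv : IsConvexSubgroup C) (hconr : IsConradianOn C)
    {f g u v w : Γ} (hx : IsCrossing f g u v w) (hm : u⁻¹ * w ∈ C) : False := by
  obtain ⟨huw, hwv, h3, M, N, hM, hN, h4, h5⟩ := hx
  set F : Γ := u⁻¹ * f ^ N * u with hFdef
  set G : Γ := u⁻¹ * g ^ M * u with hGdef
  set V : Γ := u⁻¹ * v with hVdef
  set W : Γ := u⁻¹ * w with hWdef
  set P : Γ := u⁻¹ * (f ^ N * v) with hPdef
  -- basic inequalities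
  have hW1 : (1 : Γ) < W := by
    have := lmul u⁻¹ huw; simpa [hWdef] using this
  have hWG : W < G := by
    have := lmul u⁻¹ h5
    simpa [hWdef, hGdef, mul_assoc] using this
  have hG1 : (1 : Γ) < G := hW1.trans hWG
  have hP1 : (1 : Γ) < P := by
    have := lmul u⁻¹ (h3 N hN).2; simpa [hPdef] using this
  have hPW : P < W := by
    have := lmul u⁻¹ h4; simpa [hPdef, hWdef] using this
  have hGnV : ∀ n : ℕ, 0 < n → G ^ n < V := by
    intro n hn
    have hMn : 0 < M * n := Nat.mul_pos hM hn
    have := lmul u⁻¹ (h3 (M * n) hMn).1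
    rw [hGdef, conjpow]
    simpa [hVdef, mul_assoc] using this
  have hFnV : ∀ n : ℕ, 0 < n → (1 : Γ) < F ^ n * V := by
    intro n hn
    have hNn : 0 < N * n := Nat.mul_pos hN hn
    have := lmul u⁻¹ (h3 (N * n) hNn).2
    rw [hFdef, conjpow]
    simpa [hVdef, mul_assoc] using this
  have hPFV : P = F * V := by rw [hPdef, hFdef, hVdef]; group
  have hVFP : V = F⁻¹ * P := by rw [hPFV]; group
  have hFGn : ∀ n : ℕ, 0 < n → F * G ^ n < P := by
    intro n hn
    have hMn : 0 < M * n := Nat.mul_pos hM hn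
    have h1 := lmul (f ^ N) (h3 (M * n) hMn).1
    have h2 := lmul u⁻¹ h1
    rw [hGdef, conjpow]
    rw [hFdef, hPdef]
    calc u⁻¹ * f ^ N * u * (u⁻¹ * g ^ (M * n) * u)
        = u⁻¹ * (f ^ N * (g ^ (M * n) * u)) := by group
      _ < u⁻¹ * (f ^ N * v) := h2
  -- membership facts
  have hWC : W ∈ C := hm
  have hPC : P ∈ C := convex_mem hconv C.one_mem hWC hP1.le hPW.le
  have hFP : F < P := by
    have h1 : F * 1 < F * G := lmul F hG1
    rw [mul_one] at h1
    exact h1.trans (by simpa using hFGn 1 one_pos)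
  have hFiP : F⁻¹ < P := by
    have h2 := hFnV 2 two_pos
    have : (1 : Γ) < F * P := by
      rw [hVFP] at h2
      calc (1 : Γ) < F ^ 2 * (F⁻¹ * P) := h2
        _ = F * P := by group
    have := lmul F⁻¹ this
    simpa [inv_mul_cancel_left] using this
  have hFC : F ∈ C := by
    rcases le_total 1 F with h | h
    · exact convex_mem hconv C.one_mem hPC h hFP.le
    · have h1 : (1 : Γ) ≤ F⁻¹ := by
        have := mul_le_mul_right h F⁻¹; simpa using this
      have : F⁻¹ ∈ C := convex_mem hconv C.one_mem hPC h1 hFiP.le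
      exact (C.inv_mem_iff).mp this
  have hVC : V ∈ C := by
    rw [hVFP]; exact C.mul_mem (C.inv_mem hFC) hPC
  have hGC : G ∈ C := by
    refine convex_mem hconv hWC hVC hWG.le ?_
    simpa using (hGnV 1 one_pos).le
  -- the violating pair
  have hX1 : (1 : Γ) < F * G := by
    have h1 : F⁻¹ < G := hFiP.trans (hPW.trans hWG)
    have := lmul F h1
    simpa using this
  have hXC : F * G ∈ C := C.mul_mem hFC hGC
  obtain ⟨n, hn, hlt⟩ := hconr (F * G) hXC G hGC hX1 hG1
  have hlt2 : F * G * G ^ n < G := by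
    have h1 : F * G * G ^ n = F * G ^ (n + 1) := by rw [pow_succ]; group
    rw [h1]
    exact (hFGn (n + 1) (Nat.succ_pos n)).trans (hPW.trans hWG)
  exact absurd hlt hlt2.asymm

/-- From a pair violating the Conradian property of the *reversed* order inside `C`,
derive a contradiction: such a pair yields a crossing with all data in `C`,
to which `lemA` applies. -/
private lemma lemPairGe {C : Subgroup Γ} (hconv : IsConvexSubgroup C)
    (hconr : IsConradianOn C) {a b : Γ} (haC : a ∈ C) (hbC : b ∈ C)
    (ha1 : a < 1) (hb1 : b < 1) (hab : ∀ n : ℕ, 0 < n → b ≤ a * b ^ n) : False := by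
  -- strictness
  have hab' : ∀ n : ℕ, 0 < n → b < a * b ^ n := by
    intro n hn
    rcases (hab n hn).eq_or_lt with heq | h
    · exfalso
      have h1 : a * b ^ (n + 1) = b * b := by
        rw [pow_succ, ← mul_assoc, ← heq]
      have h2 := hab (n + 1) (Nat.succ_pos n)
      rw [h1] at h2
      have h3 : b * b < b * 1 := lmul b hb1
      rw [mul_one] at h3
      exact absurd h2 (not_le.mpr h3)
    · exact h
  -- build a crossing (b, a, a⁻¹*b, 1, b^2)
  have hbb : b * b < b := by have := lmul b hb1; simpa using this
  have cr : IsCrossing b a (a⁻¹ * b) 1 (b ^ 2) := by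
    refine ⟨?_, ?_, ?_, 1, 3, one_pos, three_pos, ?_, ?_⟩
    · -- a⁻¹ * b < b ^ 2
      have := lmul a⁻¹ (hab' 2 two_pos)
      simpa [inv_mul_cancel_left] using this
    · -- b ^ 2 < 1
      calc b ^ 2 = b * b := sq b
        _ < b := hbb
        _ < 1 := hb1
    · intro n hn
      constructor
      · -- a ^ n * (a⁻¹ * b) < 1
        obtain ⟨m, rfl⟩ := Nat.exists_eq_succ_of_ne_zero hn.ne'
        have h1 : a ^ (m + 1) * (a⁻¹ * b) = a ^ m * b := by rw [pow_succ]; group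
        rw [h1]
        have h2 : a ^ m * b < a ^ m * 1 := lmul (a ^ m) hb1
        rw [mul_one] at h2
        exact h2.trans_le (pow_le_one' ha1.le m)
      · -- a⁻¹ * b < b ^ n * 1
        rw [mul_one]
        have := lmul a⁻¹ (hab' n hn)
        simpa [inv_mul_cancel_left] using this
    · -- b ^ 3 * 1 < b ^ 2
      rw [mul_one]
      calc b ^ 3 = b ^ 2 * b := by rw [pow_succ]
        _ < b ^ 2 * 1 := lmul (b ^ 2) hb1
        _ = b ^ 2 := mul_one _
    · -- b ^ 2 < a ^ 1 * (a⁻¹ * b)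
      have h1 : a ^ 1 * (a⁻¹ * b) = b := by group
      rw [h1, sq]
      exact hbb
  have hmem : (a⁻¹ * b)⁻¹ * b ^ 2 ∈ C := by
    have h1 : (a⁻¹ * b)⁻¹ * b ^ 2 = b⁻¹ * a * b ^ 2 := by group
    rw [h1]
    exact C.mul_mem (C.mul_mem (C.inv_mem hbC) haC) (C.pow_mem hbC 2)
  exact lemA hconv hconr cr hmem

/-- Main lemma, `v`-side: if a crossing exists, then `w⁻¹ * v ∉ C`. -/
private lemma lemA' {C : Subgroup Γ} (hconv : IsConvexSubgroup C) (hconr : IsConradianOn C)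
    {f g u v w : Γ} (hx : IsCrossing f g u v w) (hm : w⁻¹ * v ∈ C) : False := by
  obtain ⟨huw, hwv, h3, M, N, hM, hN, h4, h5⟩ := hx
  set F : Γ := v⁻¹ * g ^ M * v with hFdef
  set G : Γ := v⁻¹ * f ^ N * v with hGdef
  set V : Γ := v⁻¹ * u with hVdef
  set W : Γ := v⁻¹ * w with hWdef
  set P : Γ := v⁻¹ * (g ^ M * u) with hPdef
  have hW1 : W < 1 := by
    have := lmul v⁻¹ hwv; simpa [hWdef] using this
  have hGW : G < W := by
    have := lmul v⁻¹ h4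
    simpa [hWdef, hGdef, mul_assoc] using this
  have hG1 : G < 1 := hGW.trans hW1
  have hWP : W < P := by
    have := lmul v⁻¹ h5; simpa [hPdef, hWdef] using this
  have hP1 : P < 1 := by
    have := lmul v⁻¹ (h3 M hM).1; simpa [hPdef] using this
  have hGnV : ∀ n : ℕ, 0 < n → V < G ^ n := by
    intro n hn
    have hNn : 0 < N * n := Nat.mul_pos hN hn
    have := lmul v⁻¹ (h3 (N * n) hNn).2
    rw [hGdef, conjpow]
    simpa [hVdef, mul_assoc] using this
  have hFnV : ∀ n : ℕ, 0 < n → F ^ n * V < 1 := by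
    intro n hn
    have hMn : 0 < M * n := Nat.mul_pos hM hn
    have := lmul v⁻¹ (h3 (M * n) hMn).1
    rw [hFdef, conjpow]
    have he : v⁻¹ * g ^ (M * n) * v * V = v⁻¹ * (g ^ (M * n) * u) := by
      rw [hVdef]; group
    rw [he]
    simpa using this
  have hPFV : P = F * V := by rw [hPdef, hFdef, hVdef]; group
  have hVFP : V = F⁻¹ * P := by rw [hPFV]; group
  have hFGn : ∀ n : ℕ, 0 < n → P < F * G ^ n := by
    intro n hn
    have hNn : 0 < N * n := Nat.mul_pos hN hn
    have h1 := lmul (g ^ M) (h3 (N * n) hNn).2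
    have h2 := lmul v⁻¹ h1
    rw [hGdef, conjpow, hFdef, hPdef]
    calc v⁻¹ * (g ^ M * u) < v⁻¹ * (g ^ M * (f ^ (N * n) * v)) := h2
      _ = v⁻¹ * g ^ M * v * (v⁻¹ * f ^ (N * n) * v) := by group
  -- membership facts
  have hWC : W ∈ C := by
    have : (w⁻¹ * v)⁻¹ ∈ C := C.inv_mem hm
    simpa [hWdef, mul_inv_rev] using this
  have hPC : P ∈ C := convex_mem hconv hWC C.one_mem hWP.le hP1.le
  have hPF : P < F := by
    have h1 : F * G < F * 1 := lmul F hG1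
    rw [mul_one] at h1
    have h0 : P < F * G := by simpa using hFGn 1 one_pos
    exact h0.trans h1
  have hPFi : P < F⁻¹ := by
    have h2 := hFnV 2 two_pos
    have : F * P < 1 := by
      rw [hVFP] at h2
      calc F * P = F ^ 2 * (F⁻¹ * P) := by group
        _ < 1 := h2
    have := lmul F⁻¹ this
    simpa [inv_mul_cancel_left] using this
  have hFC : F ∈ C := by
    rcases le_total F 1 with h | h
    · exact convex_mem hconv hPC C.one_mem hPF.le h
    · have h1 : F⁻¹ ≤ 1 := by
        have := mul_le_mul_right h F⁻¹; simpa using this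
      have : F⁻¹ ∈ C := convex_mem hconv hPC C.one_mem hPFi.le h1
      exact (C.inv_mem_iff).mp this
  have hVC : V ∈ C := by
    rw [hVFP]; exact C.mul_mem (C.inv_mem hFC) hPC
  have hGC : G ∈ C := by
    refine convex_mem hconv hVC hWC ?_ hGW.le
    simpa using (hGnV 1 one_pos).le
  -- the violating pair for the reversed order
  have hX1 : F * G < 1 := by
    have h1 : G < F⁻¹ := hGW.trans (hWP.trans hPFi)
    have := lmul F h1
    simpa using this
  have hXC : F * G ∈ C := C.mul_mem hFC hGC
  have hpair : ∀ n : ℕ, 0 < n → G ≤ F * G * G ^ n := by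
    intro n hn
    have h1 : F * G * G ^ n = F * G ^ (n + 1) := by rw [pow_succ]; group
    rw [h1]
    exact (hGW.trans (hWP.trans (hFGn (n + 1) (Nat.succ_pos n)))).le
  exact lemPairGe hconv hconr hXC hGC hX1 hG1 hpair

/-- If `x < y` and `x⁻¹ * y ∉ C`, the cosets `xC` and `yC` are separated. -/
private lemma coset_lt {C : Subgroup Γ} (hconv : IsConvexSubgroup C) {x y : Γ}
    (hxy : x < y) (hnot : x⁻¹ * y ∉ C) :
    ∀ h₁ ∈ C, ∀ h₂ ∈ C, x * h₁ < y * h₂ := by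
  intro h₁ hh₁ h₂ hh₂
  by_contra hle
  push_neg at hle
  apply hnot
  rcases le_or_gt y (x * h₁) with h | h
  · have h1 : (1 : Γ) < x⁻¹ * y := by
      have := lmul x⁻¹ hxy; simpa using this
    have h2 : x⁻¹ * y ≤ h₁ := by
      have := mul_le_mul_right h x⁻¹; simpa [inv_mul_cancel_left] using this
    exact convex_mem hconv C.one_mem hh₁ h1.le h2
  · -- y * h₂ ≤ x * h₁ < y
    have h1 : h₂ ≤ y⁻¹ * (x * h₁) := by
      have := mul_le_mul_right hle y⁻¹; simpa [inv_mul_cancel_left] using this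
    have h2 : y⁻¹ * (x * h₁) < 1 := by
      have := lmul y⁻¹ h; simpa using this
    have h3 : y⁻¹ * (x * h₁) ∈ C := convex_mem hconv hh₂ C.one_mem h1 h2.le
    have h4 : y⁻¹ * x ∈ C := by
      have := C.mul_mem h3 (C.inv_mem hh₁)
      simpa [mul_assoc] using this
    have := C.inv_mem h4
    simpa [mul_inv_rev] using this

end Aux

/-- Every left coset `gC` of the Conradian soul is a convex subset, and for every
crossing `(f, g, u, v, w)` one has `u C < w C < v C`, in the sense that
`u h₁ < w h₂ < v h₃` for all `h₁, h₂, h₃ ∈ C`. -/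
theorem cosets_of_soul_convex_and_separated (Γ : Type*) [Group Γ] [LinearOrder Γ]
    [CovariantClass Γ Γ (· * ·) (· ≤ ·)]
    (C : Subgroup Γ) (hC : IsConradianSoul C) :
    (∀ g x y z : Γ, x ∈ g • (C : Set Γ) → y ∈ g • (C : Set Γ) →
      x < z → z < y → z ∈ g • (C : Set Γ)) ∧
    (∀ f g u v w : Γ, IsCrossing f g u v w →
      ∀ h₁ ∈ C, ∀ h₂ ∈ C, ∀ h₃ ∈ C, u * h₁ < w * h₂ ∧ w * h₂ < v * h₃) := by
  obtain ⟨hconv, hconr, -⟩ := hC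
  constructor
  · intro g x y z hx hy hxz hzy
    rw [Set.mem_smul_set_iff_inv_smul_mem] at hx hy ⊢
    rw [smul_eq_mul] at hx hy ⊢
    have h1 : g⁻¹ * x < g⁻¹ * z := lmul g⁻¹ hxz
    have h2 : g⁻¹ * z < g⁻¹ * y := lmul g⁻¹ hzy
    exact hconv _ hx _ hy _ h1 h2
  · intro f g u v w hx h₁ hh₁ h₂ hh₂ h₃ hh₃
    have huw : u < w := hx.1
    have hwv : w < v := hx.2.1
    have hn1 : u⁻¹ * w ∉ C := fun hmem => lemA hconv hconr hx hmem
    have hn2 : w⁻¹ * v ∉ C := fun hmem => lemA' hconv hconr hx hmem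
    exact ⟨coset_lt hconv huw hn1 h₁ hh₁ h₂ hh₂,
      coset_lt hconv hwv hn2 h₂ hh₂ h₃ hh₃⟩
end
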